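/- arXiv:2509.07377 — 9 statements merged into one kernel-verified Lean document; each statement's English description precedes it below -/
import Mathlib

section
/- Let k be a field and p a positive integer. For 1 ≤ j ≤ p let M_j := k[X]/(X^j), a finite-dimensional k-vector space equipped with the endomorphism x given by multiplication by X (which satisfies x^p = 0). Then for all 1 ≤ i ≤ p and 1 ≤ j ≤ p, the k-vector space φ_i(M_j, x) has dimension 1 over k if i = j, and dimension 0 if i ≠ j. -/
/-!
In `k[X]/(X^j)` the kernel of `x = X·` is the line spanned by `X^(j-1)`, which is also the range
of `x^(j-1)`. Hence `ker x ⊓ range x^m` is all of `ker x` for `m < j` and is `0` for `m ≥ j`, so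
the quotient `φ_i` vanishes unless `i = j`, where it is the line `ker x` itself.
-/

open LinearMap Polynomial

/-- The `i`-th component of the semisimplification functor: for a `k`-vector space `V`
with endomorphism `x`, `φ_i(V,x) := (ker x ⊓ range x^(i-1)) ⧸ (ker x ⊓ range x^i)`. -/
abbrev phi {k V : Type*} [Field k] [AddCommGroup V] [Module k V]
    (x : V →ₗ[k] V) (i : ℕ) :=
  ↥(LinearMap.ker x ⊓ LinearMap.range (x ^ (i - 1))) ⧸
    ((LinearMap.ker x ⊓ LinearMap.range (x ^ i)).comap
      (LinearMap.ker x ⊓ LinearMap.range (x ^ (i - 1))).subtype)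

section phi

variable {k V : Type*} [Field k] [AddCommGroup V] [Module k V]

theorem range_pow_le_range_pow (x : V →ₗ[k] V) {m n : ℕ} (h : m ≤ n) :
    range (x ^ n) ≤ range (x ^ m) :=
  (iterateRange x).monotone h

theorem finrank_phi_eq_zero_of_inf_eq {x : V →ₗ[k] V} {i : ℕ}
    (h : ker x ⊓ range (x ^ i) = ker x ⊓ range (x ^ (i - 1))) :
    Module.finrank k (phi x i) = 0 := by
  have : Subsingleton (phi x i) := Submodule.Quotient.subsingleton_iff.mpr <| by
    rw [h, Submodule.comap_subtype_self]
  exact Module.finrank_zero_of_subsingleton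

theorem finrank_phi_eq_of_inf_eq_bot {x : V →ₗ[k] V} {i : ℕ}
    (h : ker x ⊓ range (x ^ i) = ⊥) :
    Module.finrank k (phi x i) = Module.finrank k ↥(ker x ⊓ range (x ^ (i - 1))) :=
  (Submodule.quotEquivOfEqBot _ <| by
    rw [h, Submodule.comap_bot, Submodule.ker_subtype]).finrank_eq

theorem finrank_phi_eq_ite {x : V →ₗ[k] V} {j : ℕ} (hnil : x ^ j = 0)
    (hker : ker x ≤ range (x ^ (j - 1))) (i : ℕ) :
    Module.finrank k (phi x i) = if i = j then Module.finrank k (ker x) else 0 := by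
  have hker_le (m : ℕ) (hm : m ≤ j - 1) : ker x ≤ range (x ^ m) :=
    hker.trans (range_pow_le_range_pow x hm)
  have hrange_eq_bot (m : ℕ) (hm : j ≤ m) : range (x ^ m) = ⊥ := by
    rw [← Nat.sub_add_cancel hm, pow_add, hnil, mul_zero, range_zero]
  rcases lt_trichotomy i j with hij | rfl | hij
  · rw [if_neg hij.ne, finrank_phi_eq_zero_of_inf_eq]
    rw [inf_eq_left.mpr (hker_le i (by omega)), inf_eq_left.mpr (hker_le (i - 1) (by omega))]
  · rw [if_pos rfl, finrank_phi_eq_of_inf_eq_bot (by rw [hrange_eq_bot i le_rfl, inf_bot_eq]),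
      inf_eq_left.mpr hker]
  · rw [if_neg hij.ne', finrank_phi_eq_zero_of_inf_eq]
    rw [hrange_eq_bot i hij.le, hrange_eq_bot (i - 1) (by omega)]

end phi

section truncated

variable {k : Type*} [Field k] {j : ℕ}

theorem mk_X_pow_eq_zero_iff {m : ℕ} :
    Ideal.Quotient.mk (Ideal.span {(X : k[X]) ^ j}) (X ^ m) = 0 ↔ j ≤ m := by
  rw [Ideal.Quotient.eq_zero_iff_mem, Ideal.mem_span_singleton, _root_.pow_dvd_pow_iff X_ne_zero
    not_isUnit_X]

theorem mulLeft_mk_X_pow (m : ℕ) :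
    mulLeft k (Ideal.Quotient.mk (Ideal.span {(X : k[X]) ^ j}) X) ^ m =
      mulLeft k (Ideal.Quotient.mk (Ideal.span {(X : k[X]) ^ j}) (X ^ m)) := by
  rw [pow_mulLeft, map_pow]

theorem mulLeft_mk_X_pow_eq_zero :
    mulLeft k (Ideal.Quotient.mk (Ideal.span {(X : k[X]) ^ j}) X) ^ j = 0 := by
  rw [mulLeft_mk_X_pow, mk_X_pow_eq_zero_iff.mpr le_rfl, mulLeft_zero_eq_zero]

theorem ker_mulLeft_mk_X_le_range (hj : 0 < j) :
    ker (mulLeft k (Ideal.Quotient.mk (Ideal.span {(X : k[X]) ^ j}) X)) ≤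
      range (mulLeft k (Ideal.Quotient.mk (Ideal.span {(X : k[X]) ^ j}) X) ^ (j - 1)) := by
  intro v hv
  obtain ⟨f, rfl⟩ := Ideal.Quotient.mk_surjective v
  have hXf : X * X ^ (j - 1) ∣ X * f := by
    rw [← pow_succ', Nat.sub_add_cancel hj, ← Ideal.mem_span_singleton,
      ← Ideal.Quotient.eq_zero_iff_mem, map_mul]
    exact hv
  obtain ⟨g, rfl⟩ := (mul_dvd_mul_iff_left X_ne_zero).mp hXf
  exact ⟨Ideal.Quotient.mk _ g, by rw [mulLeft_mk_X_pow, mulLeft_apply, map_mul]⟩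

theorem range_mulLeft_mk_X_pow_pred_le_span (hj : 0 < j) :
    range (mulLeft k (Ideal.Quotient.mk (Ideal.span {(X : k[X]) ^ j}) X) ^ (j - 1)) ≤
      k ∙ Ideal.Quotient.mk (Ideal.span {(X : k[X]) ^ j}) (X ^ (j - 1)) := by
  rintro _ ⟨v, rfl⟩
  obtain ⟨g, rfl⟩ := Ideal.Quotient.mk_surjective v
  refine Submodule.mem_span_singleton.mpr ⟨g.coeff 0, ?_⟩
  -- `X ^ (j - 1) * g ≡ g(0) • X ^ (j - 1)` modulo `X ^ j`, since `X ∣ g - g(0)`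
  obtain ⟨h, hh⟩ := X_dvd_sub_C (p := g)
  rw [mulLeft_mk_X_pow, mulLeft_apply, ← map_mul, ← Ideal.Quotient.mkₐ_eq_mk k, ← map_smul,
    ← C_mul', Ideal.Quotient.mkₐ_eq_mk, Ideal.Quotient.mk_eq_mk_iff_sub_mem,
    Ideal.mem_span_singleton, ← dvd_neg, neg_sub, mul_comm (C _), ← mul_sub, hh, ← mul_assoc,
    ← pow_succ, Nat.sub_add_cancel hj]
  exact dvd_mul_right _ _

theorem ker_mulLeft_mk_X_eq_span (hj : 0 < j) :
    ker (mulLeft k (Ideal.Quotient.mk (Ideal.span {(X : k[X]) ^ j}) X)) =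
      k ∙ Ideal.Quotient.mk (Ideal.span {(X : k[X]) ^ j}) (X ^ (j - 1)) := by
  refine le_antisymm ((ker_mulLeft_mk_X_le_range hj).trans
    (range_mulLeft_mk_X_pow_pred_le_span hj)) ?_
  rw [Submodule.span_singleton_le_iff_mem, mem_ker, mulLeft_apply, ← map_mul, ← pow_succ',
    Nat.sub_add_cancel hj, mk_X_pow_eq_zero_iff]

theorem finrank_ker_mulLeft_mk_X (hj : 0 < j) :
    Module.finrank k (ker (mulLeft k (Ideal.Quotient.mk (Ideal.span {(X : k[X]) ^ j}) X))) =
      1 := by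
  rw [ker_mulLeft_mk_X_eq_span hj]
  exact finrank_span_singleton (mt mk_X_pow_eq_zero_iff.mp (by omega))

end truncated

theorem stmt0_general (k : Type*) [Field k] (p : ℕ)
    (i j : ℕ) (hj1 : 1 ≤ j) (hjp : j ≤ p) :
    (LinearMap.mulLeft k
        (Ideal.Quotient.mk (Ideal.span {(X : Polynomial k) ^ j}) X)) ^ p = 0 ∧
    Module.finrank k
      (phi (LinearMap.mulLeft k
        (Ideal.Quotient.mk (Ideal.span {(X : Polynomial k) ^ j}) X)) i) =
      if i = j then 1 else 0 := by
  refine ⟨pow_eq_zero_of_le hjp mulLeft_mk_X_pow_eq_zero, ?_⟩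
  rw [finrank_phi_eq_ite mulLeft_mk_X_pow_eq_zero (ker_mulLeft_mk_X_le_range hj1),
    finrank_ker_mulLeft_mk_X hj1]

/-- for `M_j := k[X]/(X^j)` with `x` multiplication by `X` (which satisfies
`x^p = 0`), for all `1 ≤ i ≤ p`, `1 ≤ j ≤ p`, `dim_k φ_i(M_j,x) = 1` if `i = j` and `0`
otherwise. -/
theorem stmt0 (k : Type*) [Field k] (p : ℕ) (hp : 0 < p)
    (i j : ℕ) (hi1 : 1 ≤ i) (hip : i ≤ p) (hj1 : 1 ≤ j) (hjp : j ≤ p) :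
    (LinearMap.mulLeft k
        (Ideal.Quotient.mk (Ideal.span {(X : Polynomial k) ^ j}) X)) ^ p = 0 ∧
    Module.finrank k
      (phi (LinearMap.mulLeft k
        (Ideal.Quotient.mk (Ideal.span {(X : Polynomial k) ^ j}) X)) i) =
      if i = j then 1 else 0 :=
  stmt0_general k p i j hj1 hjp
end

section
/- Let k be a field, p a positive integer, and R := k[X]/(X^p). Let 0 → A →^f B →^g C → 0 be a short exact sequence of R-modules which are finite-dimensional over k, and write x for the multiplication-by-X endomorphism of each module (so x^p = 0). Since any R-module map sends ker x into ker x and range x^j into range x^j, for each 1 ≤ i ≤ p−1 the maps f and g induce k-linear maps φ_i(f) : φ_i(A,x) → φ_i(B,x) and φ_i(g) : φ_i(B,x) → φ_i(C,x). Then the following are equivalent: (1) φ_i(f) is injective for every 1 ≤ i ≤ p−1; (2) φ_i(g) is surjective for every 1 ≤ i ≤ p−1; (3) for every 1 ≤ i ≤ p−1 the sequence 0 → φ_i(A,x) → φ_i(B,x) → φ_i(C,x) → 0 is a short exact sequence of k-vector spaces; (4) the original sequence splits as a sequence of R-modules, i.e. there exists an R-module map r : B → A with r ∘ f = id_A. 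-/
/-!
Call an `x`-stable subspace `A ≤ B` pure if `A ⊓ x^i B = x^i A` for all `i`. A pure subspace of a
finite-dimensional space with nilpotent `x` has an `x`-stable complement: pick `b ∈ B` whose class
modulo `A` has maximal order `n + 1`, corrected by purity so that `x^(n+1) b = 0`; a functional `l`
vanishing on `A` with `l (x^n b) = 1` cuts out the `x`-stable subspace
`{v | l (x^j v) = 0 for j ≤ n}`, which contains `A` and is complementary to the cyclic subspace
spanned by the `x^j b`; then induct on dimension.

Injectivity of all `φ_i(f)` says that `f` preserves the heights of elements of `ker x`, and a
descending induction on the height extends this to all elements, so `range f` is pure. Dually,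
surjectivity of all `φ_i(g)` lets socle elements of `C` of height `≥ i` lift to socle elements of
the same height, hence elements killed by `x^j` lift to elements killed by `x^j`, so `ker g` is
pure. Conversely `φ_i` is an additive functor, so it takes the split sequence to a split exact one.
-/

open LinearMap

section
variable {k : Type*} [Field k] {A B : Type*} [AddCommGroup A] [Module k A]
  [AddCommGroup B] [Module k B]

lemma comm_pow {xA : A →ₗ[k] A} {xB : B →ₗ[k] B} {f : A →ₗ[k] B}
    (h : f ∘ₗ xA = xB ∘ₗ f) (n : ℕ) : f ∘ₗ (xA ^ n) = (xB ^ n) ∘ₗ f := by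
  induction n with
  | zero => simp [Module.End.one_eq_id]
  | succ n ih =>
    rw [pow_succ, pow_succ, Module.End.mul_eq_comp, Module.End.mul_eq_comp,
      ← LinearMap.comp_assoc, ih, LinearMap.comp_assoc, h, ← LinearMap.comp_assoc]

lemma mapsTo_phiSub {xA : A →ₗ[k] A} {xB : B →ₗ[k] B} {f : A →ₗ[k] B}
    (h : f ∘ₗ xA = xB ∘ₗ f) (i : ℕ) :
    ∀ v ∈ LinearMap.ker xA ⊓ LinearMap.range (xA ^ i),
      f v ∈ LinearMap.ker xB ⊓ LinearMap.range (xB ^ i) := by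
  intro v hv
  obtain ⟨hv1, hv2⟩ := Submodule.mem_inf.mp hv
  refine Submodule.mem_inf.mpr ⟨?_, ?_⟩
  · rw [LinearMap.mem_ker] at hv1 ⊢
    have := LinearMap.congr_fun h v
    simp only [LinearMap.comp_apply] at this
    rw [← this, hv1, map_zero]
  · obtain ⟨u, hu⟩ := hv2
    refine ⟨f u, ?_⟩
    have := LinearMap.congr_fun (comm_pow h i) u
    simp only [LinearMap.comp_apply] at this
    rw [← this, hu]

/-- The `k`-linear map `φ_i(f) : φ_i(A, xA) → φ_i(B, xB)` induced by a map `f`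
commuting with the nilpotent endomorphisms. -/
noncomputable def phiMap (xA : A →ₗ[k] A) (xB : B →ₗ[k] B) (f : A →ₗ[k] B)
    (h : f ∘ₗ xA = xB ∘ₗ f) (i : ℕ) : phi xA i →ₗ[k] phi xB i :=
  Submodule.mapQ _ _
    (f.restrict (p := LinearMap.ker xA ⊓ LinearMap.range (xA ^ (i - 1)))
      (q := LinearMap.ker xB ⊓ LinearMap.range (xB ^ (i - 1)))
      (mapsTo_phiSub h (i - 1)))
    (by
      intro v hv
      simp only [Submodule.mem_comap, LinearMap.restrict_apply] at hv ⊢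
      exact mapsTo_phiSub h i v.1 hv)

end

open Module

section PhiFunctor

variable {k : Type*} [Field k] {A B C : Type*} [AddCommGroup A] [Module k A]
  [AddCommGroup B] [Module k B] [AddCommGroup C] [Module k C]
  {xA : A →ₗ[k] A} {xB : B →ₗ[k] B} {xC : C →ₗ[k] C}

lemma map_pow_apply {f : A →ₗ[k] B} (hf : f ∘ₗ xA = xB ∘ₗ f) (n : ℕ) (a : A) :
    f ((xA ^ n) a) = (xB ^ n) (f a) :=
  LinearMap.congr_fun (comm_pow hf n) a

lemma phiMap_mk {f : A →ₗ[k] B} (hf : f ∘ₗ xA = xB ∘ₗ f) (i : ℕ) (v : A)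
    (hv : v ∈ ker xA ⊓ range (xA ^ (i - 1))) :
    phiMap xA xB f hf i (Submodule.Quotient.mk ⟨v, hv⟩) =
      Submodule.Quotient.mk ⟨f v, mapsTo_phiSub hf (i - 1) v hv⟩ :=
  rfl

lemma phiMap_comp {f : A →ₗ[k] B} {g : B →ₗ[k] C} (hf : f ∘ₗ xA = xB ∘ₗ f)
    (hg : g ∘ₗ xB = xC ∘ₗ g) (i : ℕ) :
    phiMap xA xC (g ∘ₗ f) (by rw [comp_assoc, hf, ← comp_assoc, hg, comp_assoc]) i =
      phiMap xB xC g hg i ∘ₗ phiMap xA xB f hf i := by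
  ext ⟨v, hv⟩
  rfl

lemma phiMap_add {f₁ f₂ : A →ₗ[k] B} (h₁ : f₁ ∘ₗ xA = xB ∘ₗ f₁) (h₂ : f₂ ∘ₗ xA = xB ∘ₗ f₂)
    (i : ℕ) :
    phiMap xA xB (f₁ + f₂) (by rw [add_comp, comp_add, h₁, h₂]) i =
      phiMap xA xB f₁ h₁ i + phiMap xA xB f₂ h₂ i := by
  ext ⟨v, hv⟩
  rfl

lemma phiMap_eq_id {f : A →ₗ[k] A} (hf : f ∘ₗ xA = xA ∘ₗ f) (e : f = LinearMap.id) (i : ℕ) :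
    phiMap xA xA f hf i = LinearMap.id := by
  subst e
  ext ⟨v, hv⟩
  rfl

lemma phiMap_eq_zero {f : A →ₗ[k] B} (hf : f ∘ₗ xA = xB ∘ₗ f) (e : f = 0) (i : ℕ) :
    phiMap xA xB f hf i = 0 := by
  subst e
  ext ⟨v, hv⟩
  exact (Submodule.Quotient.mk_eq_zero _).2 (zero_mem _)

theorem phiMap_shortExact_of_split {f : A →ₗ[k] B} {g : B →ₗ[k] C} {r : B →ₗ[k] A}
    {s : C →ₗ[k] B} (hf : f ∘ₗ xA = xB ∘ₗ f) (hg : g ∘ₗ xB = xC ∘ₗ g)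
    (hr : r ∘ₗ xB = xA ∘ₗ r) (hs : s ∘ₗ xC = xB ∘ₗ s) (hrf : r ∘ₗ f = LinearMap.id)
    (hgs : g ∘ₗ s = LinearMap.id) (hgf : g ∘ₗ f = 0)
    (hsum : f ∘ₗ r + s ∘ₗ g = LinearMap.id) (i : ℕ) :
    Function.Injective (phiMap xA xB f hf i) ∧ Function.Surjective (phiMap xB xC g hg i) ∧
      range (phiMap xA xB f hf i) = ker (phiMap xB xC g hg i) := by
  have hRF : phiMap xB xA r hr i ∘ₗ phiMap xA xB f hf i = LinearMap.id := by
    rw [← phiMap_comp, phiMap_eq_id _ hrf]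
  have hGS : phiMap xB xC g hg i ∘ₗ phiMap xC xB s hs i = LinearMap.id := by
    rw [← phiMap_comp, phiMap_eq_id _ hgs]
  have hGF : phiMap xB xC g hg i ∘ₗ phiMap xA xB f hf i = 0 := by
    rw [← phiMap_comp, phiMap_eq_zero _ hgf]
  have hSum : phiMap xA xB f hf i ∘ₗ phiMap xB xA r hr i +
      phiMap xC xB s hs i ∘ₗ phiMap xB xC g hg i = LinearMap.id := by
    rw [← phiMap_comp, ← phiMap_comp, ← phiMap_add, phiMap_eq_id _ hsum]
  refine ⟨Function.LeftInverse.injective (LinearMap.congr_fun hRF),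
    Function.LeftInverse.surjective (LinearMap.congr_fun hGS), le_antisymm ?_ ?_⟩
  · rintro _ ⟨y, rfl⟩
    exact LinearMap.congr_fun hGF y
  · intro y hy
    refine ⟨phiMap xB xA r hr i y, ?_⟩
    have := LinearMap.congr_fun hSum y
    rwa [LinearMap.add_apply, comp_apply, comp_apply, LinearMap.mem_ker.mp hy, map_zero,
      add_zero] at this

end PhiFunctor

section Splitting

variable {k V : Type*} [Field k] [AddCommGroup V] [Module k V] {x : Module.End k V}

lemma pow_mem_invtSubmodule {A : Submodule k V} (hA : A ∈ x.invtSubmodule) (n : ℕ) :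
    A ∈ (x ^ n).invtSubmodule := by
  induction n with
  | zero => simp
  | succ n ih =>
    rw [pow_succ, Module.End.mul_eq_comp]
    exact Module.End.invtSubmodule.comp _ ih hA

lemma pow_apply_eq_zero_of_le {b : V} {m j : ℕ} (hb : (x ^ m) b = 0) (h : m ≤ j) :
    (x ^ j) b = 0 := by
  rw [← Nat.sub_add_cancel h, pow_add, Module.End.mul_apply, hb, map_zero]

def cyclicSpan (x : Module.End k V) (b : V) (m : ℕ) : Submodule k V :=
  Submodule.span k (Set.range fun j : Fin m => (x ^ (j : ℕ)) b)

def orbitEval (x : Module.End k V) (l : Module.Dual k V) (m : ℕ) : V →ₗ[k] (Fin m → k) :=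
  LinearMap.pi fun j => l ∘ₗ x ^ (j : ℕ)

variable {b : V} {m n : ℕ} {l : Module.Dual k V}

lemma cyclicSpan_mem_invtSubmodule (hb : (x ^ m) b = 0) :
    cyclicSpan x b m ∈ x.invtSubmodule := by
  rw [Module.End.mem_invtSubmodule_iff_map_le, cyclicSpan, Submodule.map_span, Submodule.span_le]
  rintro _ ⟨_, ⟨j, rfl⟩, rfl⟩
  rw [← Module.End.mul_apply, ← pow_succ']
  rcases (show (j : ℕ) + 1 ≤ m from j.isLt).eq_or_lt with h | h
  · rw [h, hb]
    exact zero_mem _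
  · exact Submodule.subset_span ⟨⟨j + 1, h⟩, rfl⟩

lemma cyclicSpan_le {B₀ : Submodule k V} (hB₀ : B₀ ∈ x.invtSubmodule) (hb : b ∈ B₀) :
    cyclicSpan x b m ≤ B₀ :=
  Submodule.span_le.mpr <| Set.range_subset_iff.mpr fun j => pow_mem_invtSubmodule hB₀ j hb

lemma surjective_orbitEval_comp_subtype (hb : (x ^ (n + 1)) b = 0) (hl : l ((x ^ n) b) = 1) :
    Function.Surjective (orbitEval x l (n + 1) ∘ₗ (cyclicSpan x b (n + 1)).subtype) := by
  intro c
  -- the system `l (x^j u) = c j` is triangular: solve it from the top coordinate down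
  suffices ∀ d ≤ n + 1, ∃ u ∈ cyclicSpan x b (n + 1),
      ∀ j : Fin (n + 1), n + 1 ≤ j + d → l ((x ^ (j : ℕ)) u) = c j by
    obtain ⟨u, hu, huc⟩ := this (n + 1) le_rfl
    exact ⟨⟨u, hu⟩, funext fun j => huc j (by omega)⟩
  intro d
  induction d with
  | zero => exact fun _ => ⟨0, zero_mem _, fun j hj => absurd j.isLt (by omega)⟩
  | succ d ih =>
    intro hd
    obtain ⟨u, hu, huc⟩ := ih (by omega)
    let s : Fin (n + 1) := ⟨n - d, by omega⟩
    refine ⟨u + (c s - l ((x ^ (s : ℕ)) u)) • (x ^ d) b,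
      add_mem hu (Submodule.smul_mem _ _ (Submodule.subset_span ⟨⟨d, by omega⟩, rfl⟩)),
      fun j hj => ?_⟩
    rw [map_add, map_smul, map_add, map_smul, ← Module.End.mul_apply, ← pow_add, smul_eq_mul]
    rcases (show (s : ℕ) ≤ j by simp only [s]; omega).eq_or_lt with h | h
    · obtain rfl : s = j := Fin.ext h
      rw [show (s : ℕ) + d = n by simp only [s]; omega, hl, mul_one, add_sub_cancel]
    · rw [pow_apply_eq_zero_of_le hb (by simp only [s] at h; omega), map_zero, mul_zero,
        add_zero, huc j (by simp only [s] at h; omega)]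

lemma inf_ker_orbitEval_mem_invtSubmodule {B₀ : Submodule k V} (hB₀ : B₀ ∈ x.invtSubmodule)
    (hl : ∀ v ∈ B₀, l ((x ^ (n + 1)) v) = 0) :
    B₀ ⊓ ker (orbitEval x l (n + 1)) ∈ x.invtSubmodule := by
  rintro v ⟨hv, hv'⟩
  refine ⟨hB₀ hv, funext fun j => ?_⟩
  change l ((x ^ (j : ℕ)) (x v)) = 0
  rw [← Module.End.mul_apply, ← pow_succ]
  rcases (show (j : ℕ) + 1 ≤ n + 1 from j.isLt).eq_or_lt with h | h
  · rw [h]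
    exact hl v hv
  · exact congr_fun (mem_ker.mp hv') ⟨j + 1, h⟩

lemma inf_ker_orbitEval_sup_cyclicSpan {B₀ : Submodule k V} (hB₀ : B₀ ∈ x.invtSubmodule)
    (hbB : b ∈ B₀) (hb : (x ^ (n + 1)) b = 0) (hl : l ((x ^ n) b) = 1) :
    B₀ ⊓ ker (orbitEval x l (n + 1)) ⊔ cyclicSpan x b (n + 1) = B₀ := by
  refine le_antisymm (sup_le inf_le_left (cyclicSpan_le hB₀ hbB)) fun v hv => ?_
  obtain ⟨⟨u, hu⟩, huv⟩ := surjective_orbitEval_comp_subtype hb hl (orbitEval x l (n + 1) v)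
  have : v - u ∈ B₀ ⊓ ker (orbitEval x l (n + 1)) :=
    ⟨sub_mem hv (cyclicSpan_le hB₀ hbB hu), by simpa [sub_eq_zero] using huv.symm⟩
  simpa using Submodule.add_mem_sup this hu

lemma exists_generator_of_not_le (hx : IsNilpotent x) {A B₀ : Submodule k V}
    (hA : A ∈ x.invtSubmodule) (hAB : A ≤ B₀) (hpure : ∀ i, A ⊓ B₀.map (x ^ i) ≤ A.map (x ^ i))
    (hB₀A : ¬B₀ ≤ A) :
    ∃ b ∈ B₀, ∃ n, (x ^ (n + 1)) b = 0 ∧ (x ^ n) b ∉ A ∧ ∀ v ∈ B₀, (x ^ (n + 1)) v ∈ A := by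
  classical
  have hex : ∃ m, ∀ v ∈ B₀, (x ^ m) v ∈ A := by
    obtain ⟨m, hm⟩ := hx
    exact ⟨m, fun v _ => by rw [hm]; exact zero_mem _⟩
  obtain ⟨n, hn⟩ : ∃ n, Nat.find hex = n + 1 := Nat.exists_eq_succ_of_ne_zero fun h =>
    hB₀A fun v hv => by simpa using (h ▸ Nat.find_spec hex) v hv
  have htop : ∀ v ∈ B₀, (x ^ (n + 1)) v ∈ A := hn ▸ Nat.find_spec hex
  obtain ⟨b₀, hb₀, hb₀A⟩ : ∃ b₀ ∈ B₀, (x ^ n) b₀ ∉ A := by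
    simpa using Nat.find_min hex (show n < Nat.find hex by omega)
  -- purity lets us correct `b₀` by an element of `A` so that it is killed by `x^(n+1)`
  obtain ⟨a, ha, hab⟩ := hpure (n + 1) ⟨htop b₀ hb₀, b₀, hb₀, rfl⟩
  refine ⟨b₀ - a, sub_mem hb₀ (hAB ha), n, by rw [map_sub, hab, sub_self], fun h => hb₀A ?_, htop⟩
  simpa using add_mem h (pow_mem_invtSubmodule hA n ha)

variable [FiniteDimensional k V]

lemma disjoint_ker_orbitEval_cyclicSpan (hb : (x ^ (n + 1)) b = 0) (hl : l ((x ^ n) b) = 1) :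
    Disjoint (ker (orbitEval x l (n + 1))) (cyclicSpan x b (n + 1)) := by
  have hsurj := surjective_orbitEval_comp_subtype hb hl
  have hdim : finrank k (cyclicSpan x b (n + 1)) = finrank k (Fin (n + 1) → k) := by
    refine le_antisymm ?_ ?_
    · exact (finrank_range_le_card (R := k) fun j : Fin (n + 1) => (x ^ (j : ℕ)) b).trans_eq
        (by simp)
    · have := (orbitEval x l (n + 1) ∘ₗ (cyclicSpan x b (n + 1)).subtype).finrank_range_le
      rwa [range_eq_top.mpr hsurj, finrank_top] at this
  have hinj := (injective_iff_surjective_of_finrank_eq_finrank hdim).mpr hsurj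
  refine Submodule.disjoint_def.mpr fun v hv hv' => ?_
  simpa using congr_arg Subtype.val (hinj (a₁ := ⟨v, hv'⟩) (a₂ := 0) (by simpa using hv))

theorem exists_invtSubmodule_compl_of_pure (hx : IsNilpotent x) {A B₀ : Submodule k V}
    (hA : A ∈ x.invtSubmodule) (hB₀ : B₀ ∈ x.invtSubmodule) (hAB : A ≤ B₀)
    (hpure : ∀ i, A ⊓ B₀.map (x ^ i) ≤ A.map (x ^ i)) :
    ∃ Q ∈ x.invtSubmodule, Disjoint A Q ∧ A ⊔ Q = B₀ := by
  induction hd : finrank k B₀ using Nat.strong_induction_on generalizing B₀ with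
  | _ d ih =>
    by_cases hB₀A : B₀ ≤ A
    · exact ⟨⊥, Module.End.invtSubmodule.bot_mem x, disjoint_bot_right,
        by rw [sup_bot_eq, le_antisymm hAB hB₀A]⟩
    obtain ⟨b, hbB, n, hb, hbA, htop⟩ := exists_generator_of_not_le hx hA hAB hpure hB₀A
    obtain ⟨l, hl⟩ := Projective.exists_dual_eq_one k
      ((Submodule.Quotient.mk_eq_zero A).not.mpr hbA)
    set B' := B₀ ⊓ ker (orbitEval x (l ∘ₗ A.mkQ) (n + 1))
    have hlA : ∀ a ∈ A, (l ∘ₗ A.mkQ) a = 0 := fun a ha => by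
      simp [(Submodule.Quotient.mk_eq_zero A).mpr ha]
    have hAB' : A ≤ B' := fun a ha =>
      ⟨hAB ha, funext fun j => hlA _ (pow_mem_invtSubmodule hA j ha)⟩
    have hdisj : Disjoint B' (cyclicSpan x b (n + 1)) :=
      (disjoint_ker_orbitEval_cyclicSpan hb hl).mono_left inf_le_right
    have hbB' : b ∉ B' := fun h => hbA <| by
      rw [Submodule.disjoint_def.mp hdisj b h (Submodule.subset_span ⟨0, by simp⟩),
        map_zero]
      exact zero_mem _
    obtain ⟨Q, hQ, hAQ, hAQB⟩ := ih _ (hd ▸ Submodule.finrank_lt_finrank_of_lt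
        (SetLike.lt_iff_le_and_exists.mpr ⟨inf_le_left, b, hbB, hbB'⟩))
      (inf_ker_orbitEval_mem_invtSubmodule hB₀ fun v hv => hlA _ (htop v hv)) hAB'
      (fun i => (inf_le_inf_left _ (Submodule.map_mono inf_le_left)).trans (hpure i)) rfl
    refine ⟨Q ⊔ cyclicSpan x b (n + 1), Module.End.invtSubmodule.sup_mem hQ
        (cyclicSpan_mem_invtSubmodule hb), hAQ.disjoint_sup_right_of_disjoint_sup_left
        (hAQB ▸ hdisj), ?_⟩
    rw [← sup_assoc, hAQB, inf_ker_orbitEval_sup_cyclicSpan hB₀ hbB hb hl]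

end Splitting

theorem exists_retraction_of_pure {k : Type*} [Field k] {A B : Type*} [AddCommGroup A]
    [Module k A] [AddCommGroup B] [Module k B] [FiniteDimensional k B]
    {xA : A →ₗ[k] A} {xB : B →ₗ[k] B} {f : A →ₗ[k] B} (hf : f ∘ₗ xA = xB ∘ₗ f)
    (hfinj : Function.Injective f) (hxB : IsNilpotent xB)
    (hpure : ∀ i, range f ⊓ range (xB ^ i) ≤ (range f).map (xB ^ i)) :
    ∃ r : B →ₗ[k] A, r ∘ₗ xB = xA ∘ₗ r ∧ r ∘ₗ f = LinearMap.id := by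
  have hfB : range f ∈ Module.End.invtSubmodule xB := by
    rintro _ ⟨a, rfl⟩
    exact ⟨xA a, LinearMap.congr_fun hf a⟩
  obtain ⟨Q, hQ, hdisj, hsup⟩ := exists_invtSubmodule_compl_of_pure hxB hfB
    (Module.End.invtSubmodule.top_mem xB) le_top (by simpa only [Submodule.map_top] using hpure)
  have hc : IsCompl (range f) Q := ⟨hdisj, codisjoint_iff.mpr hsup⟩
  set r := linearProjOfIsCompl Q f hfinj hc
  have hrf : ∀ a, r (f a) = a := linearProjOfIsCompl_apply_left Q f hfinj hc
  have hrQ : ∀ q ∈ Q, r q = 0 := linearProjOfIsCompl_apply_right' Q f hfinj hc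
  refine ⟨r, ?_, LinearMap.ext hrf⟩
  ext w
  obtain ⟨_, ⟨a, rfl⟩, q, hq, rfl⟩ :=
    Submodule.mem_sup.mp (hsup ▸ Submodule.mem_top : w ∈ range f ⊔ Q)
  rw [comp_apply, comp_apply, map_add, map_add, map_add, map_add, hrQ q hq, hrQ _ (hQ hq),
    ← comp_apply xB f, ← hf, comp_apply, hrf, hrf, map_zero]

lemma range_pow_succ_le {k V : Type*} [Field k] [AddCommGroup V] [Module k V]
    (x : V →ₗ[k] V) (i : ℕ) : range (x ^ (i + 1)) ≤ range (x ^ i) :=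
  (iterateRange x).monotone i.le_succ

section ShortExact

variable {k : Type*} [Field k] {A B C : Type*} [AddCommGroup A] [Module k A]
  [AddCommGroup B] [Module k B] [AddCommGroup C] [Module k C]
  {xA : A →ₗ[k] A} {xB : B →ₗ[k] B} {xC : C →ₗ[k] C} {f : A →ₗ[k] B} {g : B →ₗ[k] C}
  {p : ℕ}

lemma exists_section_of_retraction (hf : f ∘ₗ xA = xB ∘ₗ f) (hg : g ∘ₗ xB = xC ∘ₗ g)
    (hgsurj : Function.Surjective g) (hexact : range f = ker g) {r : B →ₗ[k] A}
    (hr : r ∘ₗ xB = xA ∘ₗ r) (hrf : r ∘ₗ f = LinearMap.id) :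
    ∃ s : C →ₗ[k] B, s ∘ₗ xC = xB ∘ₗ s ∧ g ∘ₗ s = LinearMap.id ∧
      f ∘ₗ r + s ∘ₗ g = LinearMap.id := by
  obtain ⟨σ, hσ⟩ := g.exists_rightInverse_of_surjective (range_eq_top.mpr hgsurj)
  set e : B →ₗ[k] B := LinearMap.id - f ∘ₗ r
  have he : ∀ b ∈ ker g, e b = 0 := by
    rintro _ hb
    obtain ⟨a, rfl⟩ := hexact ▸ hb
    simp [e, ← comp_apply r f, hrf]
  have hsg : (e ∘ₗ σ) ∘ₗ g = e := by
    ext b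
    have : σ (g b) - b ∈ ker g := by simp [← comp_apply g σ, hσ]
    simpa [sub_eq_zero] using he _ this
  have hgf : g ∘ₗ f = 0 := (LinearMap.exact_iff.mpr hexact.symm).linearMap_comp_eq_zero
  refine ⟨e ∘ₗ σ, ?_, ?_, ?_⟩
  · refine (cancel_right hgsurj).mp ?_
    rw [comp_assoc, ← hg, ← comp_assoc, hsg, comp_assoc, hsg]
    simp only [e, sub_comp, comp_sub, id_comp, comp_id, comp_assoc, hr]
    rw [← comp_assoc r, hf, comp_assoc]
  · refine (cancel_right hgsurj).mp ?_
    rw [comp_assoc, hsg]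
    simp [e, comp_sub, ← comp_assoc, hgf]
  · rw [hsg]
    simp [e]

lemma mem_range_pow_succ_of_phiMap_injective (hf : f ∘ₗ xA = xB ∘ₗ f) {i : ℕ}
    (hinj : Function.Injective (phiMap xA xB f hf (i + 1))) {a : A} (ha : xA a = 0)
    (ha' : a ∈ range (xA ^ i)) (hfa : f a ∈ range (xB ^ (i + 1))) :
    a ∈ range (xA ^ (i + 1)) := by
  have hker : xB (f a) = 0 := by rw [← comp_apply, ← hf, comp_apply, ha, map_zero]
  have h0 := hinj (a₁ := Submodule.Quotient.mk ⟨a, Submodule.mem_inf.mpr ⟨ha, ha'⟩⟩) (a₂ := 0) (by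
    rw [phiMap_mk, map_zero, Submodule.Quotient.mk_eq_zero]
    exact ⟨hker, hfa⟩)
  exact ((Submodule.Quotient.mk_eq_zero _).1 h0).2

lemma exists_lift_of_phiMap_surjective (hg : g ∘ₗ xB = xC ∘ₗ g) {i : ℕ}
    (hsurj : Function.Surjective (phiMap xB xC g hg (i + 1))) {c : C} (hc : xC c = 0)
    (hc' : c ∈ range (xC ^ i)) :
    ∃ u, xB u = 0 ∧ u ∈ range (xB ^ i) ∧ g u - c ∈ range (xC ^ (i + 1)) := by
  obtain ⟨y, hy⟩ := hsurj (Submodule.Quotient.mk ⟨c, Submodule.mem_inf.mpr ⟨hc, hc'⟩⟩)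
  obtain ⟨⟨u, hu⟩, rfl⟩ := Submodule.Quotient.mk_surjective _ y
  rw [phiMap_mk, Submodule.Quotient.eq] at hy
  exact ⟨u, hu.1, hu.2, hy.2⟩

lemma mem_range_pow_of_mem_ker_of_phiMap_injective (hf : f ∘ₗ xA = xB ∘ₗ f)
    (hxB : xB ^ p = 0) (hfinj : Function.Injective f)
    (hinj : ∀ i, 1 ≤ i → i ≤ p - 1 → Function.Injective (phiMap xA xB f hf i)) (i : ℕ) :
    ∀ a, xA a = 0 → f a ∈ range (xB ^ i) → a ∈ range (xA ^ i) := by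
  induction i with
  | zero => exact fun a _ _ => ⟨a, rfl⟩
  | succ i ih =>
    intro a ha hfa
    by_cases hip : i + 1 ≤ p - 1
    · exact mem_range_pow_succ_of_phiMap_injective hf (hinj _ (by omega) hip) ha
        (ih a ha (range_pow_succ_le xB i hfa)) hfa
    · obtain ⟨w, hw⟩ := hfa
      rw [pow_eq_zero_of_le (by omega) hxB, LinearMap.zero_apply] at hw
      rw [hfinj (hw.symm.trans (map_zero f).symm)]
      exact zero_mem _

lemma mem_range_pow_of_map_mem_range_pow (hf : f ∘ₗ xA = xB ∘ₗ f)
    (hxB : xB ^ p = 0) (hfinj : Function.Injective f)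
    (hker : ∀ i a, xA a = 0 → f a ∈ range (xB ^ i) → a ∈ range (xA ^ i)) (i : ℕ) (a : A)
    (hfa : f a ∈ range (xB ^ i)) : a ∈ range (xA ^ i) := by
  suffices ∀ d i, p ≤ i + d → ∀ a, f a ∈ range (xB ^ i) → a ∈ range (xA ^ i) from
    this p i (by omega) a hfa
  intro d
  induction d with
  | zero =>
    rintro i hi a ⟨w, hw⟩
    rw [pow_eq_zero_of_le (by omega) hxB, LinearMap.zero_apply] at hw
    rw [hfinj (hw.symm.trans (map_zero f).symm)]
    exact zero_mem _
  | succ d ih =>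
    rintro i hi a ⟨w, hw⟩
    obtain ⟨a₁, ha₁⟩ := ih (i + 1) (by omega) (xA a)
      ⟨w, by rw [pow_succ', Module.End.mul_apply, hw, ← comp_apply, ← hf, comp_apply]⟩
    have : a - (xA ^ i) a₁ ∈ range (xA ^ i) :=
      hker i _ (by rw [map_sub, ← Module.End.mul_apply, ← pow_succ', ha₁, sub_self])
        ⟨w - f a₁, by rw [map_sub, map_sub, hw, map_pow_apply hf]⟩
    simpa using add_mem this (mem_range_self _ a₁)

lemma exists_lift_mem_ker_of_phiMap_surjective (hg : g ∘ₗ xB = xC ∘ₗ g)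
    (hxB : xB ^ p = 0) (hgsurj : Function.Surjective g)
    (hsurj : ∀ i, 1 ≤ i → i ≤ p - 1 → Function.Surjective (phiMap xB xC g hg i)) (i : ℕ)
    (c : C) (hc : xC c = 0) (hc' : c ∈ range (xC ^ i)) :
    ∃ u, xB u = 0 ∧ u ∈ range (xB ^ i) ∧ g u = c := by
  have base : ∀ i, p ≤ i + 1 → ∀ c ∈ range (xC ^ i),
      ∃ u, xB u = 0 ∧ u ∈ range (xB ^ i) ∧ g u = c := by
    rintro i hi _ ⟨d, rfl⟩
    obtain ⟨b, rfl⟩ := hgsurj d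
    refine ⟨(xB ^ i) b, ?_, mem_range_self _ b, map_pow_apply hg i b⟩
    rw [← Module.End.mul_apply, ← pow_succ', pow_eq_zero_of_le hi hxB, LinearMap.zero_apply]
  suffices ∀ d i, p ≤ i + 1 + d → ∀ c, xC c = 0 → c ∈ range (xC ^ i) →
      ∃ u, xB u = 0 ∧ u ∈ range (xB ^ i) ∧ g u = c from this p i (by omega) c hc hc'
  intro d
  induction d with
  | zero => exact fun i hi c _ hc' => base i (by omega) c hc'
  | succ d ih =>
    intro i hi c hc hc'
    by_cases hip : p ≤ i + 1
    · exact base i hip c hc'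
    obtain ⟨u₀, hu₀, hu₀', he⟩ :=
      exists_lift_of_phiMap_surjective hg (hsurj (i + 1) (by omega) (by omega)) hc hc'
    have he' : xC (g u₀ - c) = 0 := by
      rw [map_sub, hc, sub_zero, ← comp_apply, ← hg, comp_apply, hu₀, map_zero]
    obtain ⟨u₁, hu₁, hu₁', hgu₁⟩ := ih (i + 1) (by omega) _ he' he
    exact ⟨u₀ - u₁, by rw [map_sub, hu₀, hu₁, sub_zero],
      sub_mem hu₀' (range_pow_succ_le xB i hu₁'), by rw [map_sub, hgu₁, sub_sub_cancel]⟩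

lemma exists_lift_of_pow_apply_eq_zero (hg : g ∘ₗ xB = xC ∘ₗ g)
    (hlift : ∀ i c, xC c = 0 → c ∈ range (xC ^ i) → ∃ u, xB u = 0 ∧ u ∈ range (xB ^ i) ∧ g u = c)
    (j : ℕ) : ∀ c, (xC ^ j) c = 0 → ∃ b, g b = c ∧ (xB ^ j) b = 0 := by
  induction j with
  | zero => exact fun c hc => ⟨0, by simpa using hc.symm, map_zero _⟩
  | succ j ih =>
    intro c hc
    obtain ⟨u, hu, ⟨w, rfl⟩, hgu⟩ := hlift j ((xC ^ j) c)
      (by rwa [← Module.End.mul_apply, ← pow_succ']) (mem_range_self _ c)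
    obtain ⟨b, hb, hb'⟩ := ih (c - g w) (by rw [map_sub, ← map_pow_apply hg, hgu, sub_self])
    refine ⟨w + b, by rw [map_add, hb, add_sub_cancel], ?_⟩
    rw [pow_succ', Module.End.mul_apply, map_add, hb', add_zero, hu]

lemma range_inf_range_pow_le_map (hf : f ∘ₗ xA = xB ∘ₗ f) {i : ℕ}
    (h : ∀ a, f a ∈ range (xB ^ i) → a ∈ range (xA ^ i)) :
    range f ⊓ range (xB ^ i) ≤ (range f).map (xB ^ i) := by
  rintro _ ⟨⟨a, rfl⟩, hfa⟩
  obtain ⟨a', rfl⟩ := h a hfa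
  exact ⟨f a', mem_range_self f a', (map_pow_apply hf i a').symm⟩

lemma ker_inf_range_pow_le_map (hg : g ∘ₗ xB = xC ∘ₗ g) {i : ℕ}
    (hlift : ∀ c, (xC ^ i) c = 0 → ∃ b, g b = c ∧ (xB ^ i) b = 0) :
    ker g ⊓ range (xB ^ i) ≤ (ker g).map (xB ^ i) := by
  rintro _ ⟨hz, ⟨w, rfl⟩⟩
  obtain ⟨b, hb, hb'⟩ := hlift (g w) (by rw [← map_pow_apply hg]; exact hz)
  exact ⟨w - b, by simp [hb], by rw [map_sub, hb', sub_zero]⟩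

end ShortExact

theorem stmt1_general {k : Type*} [Field k] {A B C : Type*}
    [AddCommGroup A] [Module k A] [AddCommGroup B] [Module k B]
    [AddCommGroup C] [Module k C]
    [FiniteDimensional k B]
    (p : ℕ)
    (xA : A →ₗ[k] A) (xB : B →ₗ[k] B) (xC : C →ₗ[k] C)
    (hxB : xB ^ p = 0)
    (f : A →ₗ[k] B) (g : B →ₗ[k] C)
    (hfx : f ∘ₗ xA = xB ∘ₗ f) (hgx : g ∘ₗ xB = xC ∘ₗ g)
    (hfinj : Function.Injective f) (hgsurj : Function.Surjective g)
    (hexact : LinearMap.range f = LinearMap.ker g) :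
    List.TFAE
      [ ∀ i, 1 ≤ i → i ≤ p - 1 → Function.Injective (phiMap xA xB f hfx i),
        ∀ i, 1 ≤ i → i ≤ p - 1 → Function.Surjective (phiMap xB xC g hgx i),
        ∀ i, 1 ≤ i → i ≤ p - 1 →
          Function.Injective (phiMap xA xB f hfx i) ∧
          Function.Surjective (phiMap xB xC g hgx i) ∧
          LinearMap.range (phiMap xA xB f hfx i) =
            LinearMap.ker (phiMap xB xC g hgx i),
        ∃ rr : B →ₗ[k] A, rr ∘ₗ xB = xA ∘ₗ rr ∧ rr ∘ₗ f = LinearMap.id ] := by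
  tfae_have 1 → 4 := fun h => exists_retraction_of_pure hfx hfinj ⟨p, hxB⟩ fun i =>
    range_inf_range_pow_le_map hfx (mem_range_pow_of_map_mem_range_pow hfx hxB hfinj
      (mem_range_pow_of_mem_ker_of_phiMap_injective hfx hxB hfinj h) i)
  tfae_have 2 → 4 := fun h => exists_retraction_of_pure hfx hfinj ⟨p, hxB⟩ fun i =>
    hexact ▸ ker_inf_range_pow_le_map hgx (exists_lift_of_pow_apply_eq_zero hgx
      (exists_lift_mem_ker_of_phiMap_surjective hgx hxB hgsurj h) i)
  tfae_have 4 → 3 := by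
    rintro ⟨r, hr, hrf⟩ i - -
    obtain ⟨s, hs, hgs, hsum⟩ := exists_section_of_retraction hfx hgx hgsurj hexact hr hrf
    exact phiMap_shortExact_of_split hfx hgx hr hs hrf hgs
      (LinearMap.exact_iff.mpr hexact.symm).linearMap_comp_eq_zero hsum i
  tfae_have 3 → 1 := fun h i h₁ h₂ => (h i h₁ h₂).1
  tfae_have 3 → 2 := fun h i h₁ h₂ => (h i h₁ h₂).2.1
  tfae_finish

/-- for a short exact sequence `0 → A → B → C → 0` of finite-dimensional
modules over `R = k[X]/(X^p)` (presented as vector spaces with commuting nilpotent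
endomorphisms), the following are equivalent: (1) all `φ_i(f)` are injective;
(2) all `φ_i(g)` are surjective; (3) all sequences `0 → φ_i(A) → φ_i(B) → φ_i(C) → 0`
are exact; (4) the original sequence splits as `R`-modules. -/
theorem stmt1 {k : Type*} [Field k] {A B C : Type*}
    [AddCommGroup A] [Module k A] [AddCommGroup B] [Module k B]
    [AddCommGroup C] [Module k C]
    [FiniteDimensional k A] [FiniteDimensional k B] [FiniteDimensional k C]
    (p : ℕ) (hp : 0 < p)
    (xA : A →ₗ[k] A) (xB : B →ₗ[k] B) (xC : C →ₗ[k] C)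
    (hxA : xA ^ p = 0) (hxB : xB ^ p = 0) (hxC : xC ^ p = 0)
    (f : A →ₗ[k] B) (g : B →ₗ[k] C)
    (hfx : f ∘ₗ xA = xB ∘ₗ f) (hgx : g ∘ₗ xB = xC ∘ₗ g)
    (hfinj : Function.Injective f) (hgsurj : Function.Surjective g)
    (hexact : LinearMap.range f = LinearMap.ker g) :
    List.TFAE
      [ ∀ i, 1 ≤ i → i ≤ p - 1 → Function.Injective (phiMap xA xB f hfx i),
        ∀ i, 1 ≤ i → i ≤ p - 1 → Function.Surjective (phiMap xB xC g hgx i),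
        ∀ i, 1 ≤ i → i ≤ p - 1 →
          Function.Injective (phiMap xA xB f hfx i) ∧
          Function.Surjective (phiMap xB xC g hgx i) ∧
          LinearMap.range (phiMap xA xB f hfx i) =
            LinearMap.ker (phiMap xB xC g hgx i),
        ∃ rr : B →ₗ[k] A, rr ∘ₗ xB = xA ∘ₗ rr ∧ rr ∘ₗ f = LinearMap.id ] :=
  stmt1_general p xA xB xC hxB f g hfx hgx hfinj hgsurj hexact
end

section
/- Let k be a field, p a positive integer, V a finite-dimensional k-vector space, and x a k-linear endomorphism of V with x^p = 0. Then φ_i(V,x) = 0 for all 1 ≤ i ≤ p−1 (equivalently, (ker x) ⊓ (range x^{i-1}) = (ker x) ⊓ (range x^i) for all 1 ≤ i ≤ p−1) if and only if ker x = range (x^{p-1}). -/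
/-- `φ_i(V,x) = 0` for all `1 ≤ i ≤ p-1` (equivalently, the submodule
equalities `ker x ⊓ range x^(i-1) = ker x ⊓ range x^i`) if and only if
`ker x = range x^(p-1)`. -/
theorem stmt2 (k : Type*) [Field k] (p : ℕ) (hp : 0 < p)
    (V : Type*) [AddCommGroup V] [Module k V] [FiniteDimensional k V]
    (x : V →ₗ[k] V) (hx : x ^ p = 0) :
    (∀ i, 1 ≤ i → i ≤ p - 1 →
        LinearMap.ker x ⊓ LinearMap.range (x ^ (i - 1)) =
          LinearMap.ker x ⊓ LinearMap.range (x ^ i)) ↔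
      LinearMap.ker x = LinearMap.range (x ^ (p - 1)) := by
  have hle : LinearMap.range (x ^ (p - 1)) ≤ LinearMap.ker x := by
    rintro v ⟨w, rfl⟩
    have h1 : x ^ (p - 1 + 1) = x ^ p := by congr 1; omega
    have : x ((x ^ (p - 1)) w) = (x ^ p) w := by
      rw [← h1, pow_succ', Module.End.mul_apply]
    simp [LinearMap.mem_ker, this, hx]
  constructor
  · intro h
    have key : ∀ j, j ≤ p - 1 → LinearMap.ker x ≤ LinearMap.range (x ^ j) := by
      intro j
      induction j with
      | zero => intro _ v _; exact ⟨v, rfl⟩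
      | succ n ih =>
        intro hn
        have h1 := h (n + 1) (Nat.le_add_left 1 n) hn
        have h2 := ih (le_trans (Nat.le_succ n) hn)
        intro v hv
        have hv' : v ∈ LinearMap.ker x ⊓ LinearMap.range (x ^ (n + 1 - 1)) :=
          ⟨hv, h2 hv⟩
        rw [h1] at hv'
        exact hv'.2
    exact le_antisymm (key (p - 1) le_rfl) hle
  · intro h i h1 h2
    apply le_antisymm
    · rintro v ⟨hv, -⟩
      refine ⟨hv, ?_⟩
      have : v ∈ LinearMap.range (x ^ (p - 1)) := h ▸ hv
      obtain ⟨u, rfl⟩ := this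
      refine ⟨(x ^ (p - 1 - i)) u, ?_⟩
      rw [← Module.End.mul_apply, ← pow_add]
      congr 2
      omega
    · refine inf_le_inf_left _ ?_
      rintro v ⟨w, rfl⟩
      refine ⟨x w, ?_⟩
      rw [← Module.End.mul_apply, ← pow_succ]
      congr 2
      omega
end

section
/- Let p be a prime, k a field of characteristic p, X a finite set, and σ : X ≃ X a permutation with σ^p = 1. Let V := (X → k) be the permutation representation, T : V →ₗ[k] V the k-linear map f ↦ f ∘ σ⁻¹, and x := T − id. Then x^p = 0, the k-dimension of φ_1(V,x) equals the number of fixed points of σ in X, and φ_i(V,x) = 0 for every 2 ≤ i ≤ p−1. -/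
open Equiv Finset Function LinearMap

section CharP

variable {A : Type*} [Ring A] {p : ℕ}

open Polynomial in
theorem sub_one_pow_pred_eq_geom_sum (k : Type*) [CommRing k] [CharP k p] [Algebra k A]
    (hp : p.Prime) (t : A) :
    (t - 1) ^ (p - 1) = ∑ i ∈ range p, t ^ i := by
  have := Fact.mk hp
  have h := cyclotomic_mul_prime_eq_pow_of_not_dvd k (n := 1) (Nat.Prime.not_dvd_one hp)
  rw [one_mul, cyclotomic_prime, cyclotomic_one] at h
  simpa using congr(aeval t $h).symm

theorem sub_one_pow_char_eq_zero (k : Type*) [CommRing k] [CharP k p] [Algebra k A]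
    (hp : p.Prime) {t : A} (ht : t ^ p = 1) : (t - 1) ^ p = 0 := by
  rw [← Nat.sub_add_cancel hp.one_le, pow_succ, sub_one_pow_pred_eq_geom_sum k hp,
    geom_sum_mul, ht, sub_self]

end CharP

namespace Equiv.Perm

variable {X M : Type*} (σ : Perm X)

theorem apply_zpow_apply_eq {f : X → M} (hf : ∀ a, f (σ a) = f a) (i : ℤ) (a : X) :
    f ((σ ^ i) a) = f a := by
  induction i using Int.induction_on generalizing a with
  | zero => rfl
  | succ n ih => rw [zpow_add_one, mul_apply, ih, hf]
  | pred n ih => rw [zpow_sub_one, mul_apply, ih, ← hf (σ⁻¹ a), coe_inv, apply_symm_apply]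

theorem SameCycle.apply_eq_of_invariant {σ : Perm X} {f : X → M} (hf : ∀ a, f (σ a) = f a)
    {a b : X} (h : σ.SameCycle a b) : f a = f b := by
  obtain ⟨i, rfl⟩ := h
  exact (σ.apply_zpow_apply_eq hf i a).symm

noncomputable def cycleRep (b : X) : X :=
  (Quotient.mk (SameCycle.setoid σ) b).out

theorem sameCycle_cycleRep (b : X) : σ.SameCycle (σ.cycleRep b) b :=
  Quotient.mk_out (s := SameCycle.setoid σ) b

theorem cycleRep_eq_of_sameCycle {a b : X} (h : σ.SameCycle a b) :
    σ.cycleRep a = σ.cycleRep b :=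
  congrArg Quotient.out (Quotient.sound h)

theorem card_filter_pow_apply_eq_eq_one [Finite X] [DecidableEq X] {p : ℕ} (hp : p.Prime)
    (hσ : σ ^ p = 1) {a b : X} (hab : σ.SameCycle a b) (hb : σ b ≠ b) : #{j ∈ range p | (σ ^ j) a = b} = 1 := by
  have := Fact.mk hp
  have hperiod : minimalPeriod σ a = p := by
    refine minimalPeriod_eq_prime ?_ fun ha => hb (hab.apply_eq_self_iff.1 ha)
    rw [IsPeriodicPt, IsFixedPt, iterate_eq_pow, hσ, one_apply]
  obtain ⟨n, hn⟩ := hab.exists_nat_pow_eq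
  rw [card_eq_one]
  refine ⟨n % p, ?_⟩
  ext j
  simp only [mem_filter, Finset.mem_range, mem_singleton]
  have hmod : (σ ^ (n % p)) a = b := by
    rw [← hperiod, ← iterate_eq_pow, iterate_mod_minimalPeriod_eq, iterate_eq_pow, hn]
  constructor
  · rintro ⟨hj, hja⟩
    refine iterate_injOn_Iio_minimalPeriod (f := σ) (x := a) ?_ ?_ ?_
    · rwa [Set.mem_Iio, hperiod]
    · rw [Set.mem_Iio, hperiod]
      exact Nat.mod_lt n hp.pos
    · simp only [iterate_eq_pow, hja, hmod]
  · rintro rfl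
    exact ⟨Nat.mod_lt n hp.pos, hmod⟩

theorem exists_invariant_extend_fixedPoints [Zero M] (g : {a // σ a = a} → M) :
    ∃ F : X → M, (∀ a, F (σ a) = F a) ∧ ∀ a : {a // σ a = a}, F a = g a := by
  classical
  refine ⟨fun a => if h : σ a = a then g ⟨a, h⟩ else 0, fun a => ?_, fun a => dif_pos a.2⟩
  by_cases h : σ a = a
  · rw [h]
  · simp only [dif_neg h, dif_neg (σ.injective.ne h)]

end Equiv.Perm

section PermutationRepresentation

variable {k X : Type*} [CommRing k] (σ : Perm X) {T : Module.End k (X → k)}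

theorem pow_apply_eq_comp_inv (hT : ∀ f, T f = f ∘ ⇑σ⁻¹) (j : ℕ) (f : X → k) :
    (T ^ j) f = f ∘ ⇑(σ ^ j)⁻¹ := by
  induction j with
  | zero => rfl
  | succ j ih => rw [pow_succ', Module.End.mul_apply, ih, hT, pow_succ', mul_inv_rev]; rfl

theorem mem_ker_sub_one_iff (hT : ∀ f, T f = f ∘ ⇑σ⁻¹) {f : X → k} :
    f ∈ ker (T - 1) ↔ ∀ a, f (σ a) = f a := by
  rw [mem_ker, LinearMap.sub_apply, Module.End.one_apply, sub_eq_zero, hT, funext_iff]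
  exact ⟨fun h a => by simpa using (h (σ a)).symm, fun h a => by simpa using (h (σ⁻¹ a)).symm⟩

theorem apply_eq_zero_of_mem_range_sub_one (hT : ∀ f, T f = f ∘ ⇑σ⁻¹) {f : X → k}
    (hf : f ∈ range (T - 1)) {a : X} (ha : σ a = a) : f a = 0 := by
  obtain ⟨g, rfl⟩ := hf
  have : σ⁻¹ a = a := by rw [Perm.inv_eq_iff_eq, ha]
  rw [LinearMap.sub_apply, Module.End.one_apply, hT, Pi.sub_apply, Function.comp_apply, this,
    sub_self]

theorem mem_range_sub_one_pow_pred [Finite X] {p : ℕ} [CharP k p] (hp : p.Prime)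
    (hσ : σ ^ p = 1) (hT : ∀ f, T f = f ∘ ⇑σ⁻¹) {f : X → k} (hf : ∀ a, f (σ a) = f a)
    (hfix : ∀ a, σ a = a → f a = 0) : f ∈ range ((T - 1) ^ (p - 1)) := by
  classical
  rw [sub_one_pow_pred_eq_geom_sum k hp]
  refine ⟨fun a => if σ.cycleRep a = a then f a else 0, funext fun b => ?_⟩
  have hterm : ∀ j : ℕ, (if σ.cycleRep ((σ ^ j)⁻¹ b) = (σ ^ j)⁻¹ b then f ((σ ^ j)⁻¹ b) else 0)
      = if (σ ^ j) (σ.cycleRep b) = b then f b else 0 := fun j => by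
    have hj : σ.SameCycle ((σ ^ j)⁻¹ b) b := ⟨j, by simp⟩
    rw [σ.cycleRep_eq_of_sameCycle hj, hj.apply_eq_of_invariant hf, Perm.eq_inv_iff_eq]
  simp only [LinearMap.sum_apply, Finset.sum_apply, pow_apply_eq_comp_inv σ hT, Function.comp_apply,
    hterm]
  rw [sum_ite, sum_const_zero, add_zero, sum_const]
  by_cases hb : σ b = b
  · simp [hfix b hb]
  · rw [σ.card_filter_pow_apply_eq_eq_one hp hσ (σ.sameCycle_cycleRep b) hb, one_smul]

theorem ker_inf_range_pow_eq [Finite X] {p : ℕ} [CharP k p] (hp : p.Prime) (hσ : σ ^ p = 1)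
    (hT : ∀ f, T f = f ∘ ⇑σ⁻¹) {i : ℕ} (hi : 1 ≤ i) (hip : i ≤ p - 1) :
    ker (T - 1) ⊓ range ((T - 1) ^ i) =
      ker (T - 1) ⊓ ker (funLeft k k (Subtype.val : {a // σ a = a} → X)) := by
  refine le_antisymm ?_ ?_
  · rintro f ⟨hker, hrange⟩
    refine ⟨hker, ?_⟩
    have hrange₁ : f ∈ range (T - 1) := by
      simpa using (iterateRange (T - 1)).monotone hi hrange
    exact funext fun a => apply_eq_zero_of_mem_range_sub_one σ hT hrange₁ a.2
  · rintro f ⟨hker, hfix⟩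
    refine ⟨hker, ?_⟩
    rw [SetLike.mem_coe, mem_ker_sub_one_iff σ hT] at hker
    exact (iterateRange (T - 1)).monotone hip <| mem_range_sub_one_pow_pred σ hp hσ hT hker
      fun a ha => congrFun hfix ⟨a, ha⟩

end PermutationRepresentation

theorem subsingleton_phi_of_eq {k V : Type*} [Field k] [AddCommGroup V] [Module k V]
    {x : V →ₗ[k] V} {i : ℕ}
    (h : ker x ⊓ range (x ^ i) = ker x ⊓ range (x ^ (i - 1))) : Subsingleton (phi x i) := by
  rw [Submodule.Quotient.subsingleton_iff, h, Submodule.comap_subtype_self]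

theorem finrank_phi_one_eq_card_fixedPoints {k X : Type*} [Field k] [Finite X] {p : ℕ}
    [CharP k p] (hp : p.Prime) (σ : Perm X) (hσ : σ ^ p = 1) {T : Module.End k (X → k)}
    (hT : ∀ f, T f = f ∘ ⇑σ⁻¹) :
    Module.finrank k (phi (T - 1) 1) = Nat.card {a // σ a = a} := by
  set S := ker (T - 1) ⊓ range ((T - 1) ^ (1 - 1))
  let restrict := (funLeft k k (Subtype.val : {a // σ a = a} → X)).comp S.subtype
  have hsurj : Surjective restrict := fun g => by
    obtain ⟨F, hF, hFg⟩ := σ.exists_invariant_extend_fixedPoints g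
    have hFS : F ∈ S := ⟨(mem_ker_sub_one_iff σ hT).2 hF, by simp⟩
    exact ⟨⟨F, hFS⟩, funext hFg⟩
  have hker : ker restrict = (ker (T - 1) ⊓ range ((T - 1) ^ 1)).comap S.subtype := by
    rw [ker_inf_range_pow_eq σ hp hσ hT le_rfl (Nat.le_sub_one_of_lt hp.one_lt), ker_comp,
      Submodule.comap_inf, Submodule.comap_subtype_eq_top.2 inf_le_left, top_inf_eq]
  have := Fintype.ofFinite {a // σ a = a}
  calc Module.finrank k (phi (T - 1) 1)
      = Module.finrank k (S ⧸ ker restrict) := (Submodule.quotEquivOfEq _ _ hker.symm).finrank_eq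
    _ = Module.finrank k ({a // σ a = a} → k) :=
      (restrict.quotKerEquivOfSurjective hsurj).finrank_eq
    _ = Nat.card {a // σ a = a} := by
      rw [Module.finrank_fintype_fun_eq_card, Nat.card_eq_fintype_card]

/-- for the permutation representation `V = (X → k)` of a permutation `σ`
with `σ^p = 1` over a field of characteristic `p`, with `T f = f ∘ σ⁻¹` and `x = T - id`,
we have `x^p = 0`, `dim φ_1(V,x)` is the number of fixed points of `σ`, and
`φ_i(V,x) = 0` for `2 ≤ i ≤ p-1`. -/
theorem stmt3 (p : ℕ) (hp : p.Prime) (k : Type*) [Field k] [CharP k p]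
    (X : Type*) [Fintype X] (σ : Equiv.Perm X) (hσ : σ ^ p = 1)
    (T : (X → k) →ₗ[k] (X → k)) (hT : ∀ f : X → k, T f = f ∘ ⇑σ⁻¹) :
    (T - LinearMap.id) ^ p = 0 ∧
    Module.finrank k (phi (T - LinearMap.id) 1) = Nat.card {a : X // σ a = a} ∧
    ∀ i, 2 ≤ i → i ≤ p - 1 → Subsingleton (phi (T - LinearMap.id) i) := by
  rw [← Module.End.one_eq_id]
  have hTp : T ^ p = 1 := LinearMap.ext fun f => by
    rw [pow_apply_eq_comp_inv σ hT, hσ, inv_one, Perm.coe_one, Function.comp_id,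
      Module.End.one_apply]
  refine ⟨sub_one_pow_char_eq_zero k hp hTp, finrank_phi_one_eq_card_fixedPoints hp σ hσ hT,
    fun i hi hip => subsingleton_phi_of_eq ?_⟩
  rw [ker_inf_range_pow_eq σ hp hσ hT (by omega) hip,
    ker_inf_range_pow_eq σ hp hσ hT (by omega) (by omega)]
end

section
/- Let k be a field, p a positive integer, V a finite-dimensional k-vector space, and x a k-linear endomorphism of V with x^p = 0. Then, as integers modulo p, dim_k V ≡ Σ_{i=1}^{p-1} i · dim_k φ_i(V,x) (mod p). -/
/-! The subspaces `ker x ⊓ range x^i` decrease from `ker x` to `0`, and `φ_i` is their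
successive quotient, so `dim φ_i` counts the Jordan blocks of `x` of size `i`. Rank–nullity
for `x` on `range x^i` gives `dim (ker x ⊓ range x^i) = dim range x^i - dim range x^(i+1)`;
telescoping this, and then an Abel summation, yield the exact identity
`dim V = Σ_{i=1}^{p} i · dim φ_i`, whose `i = p` term vanishes modulo `p`. -/

open LinearMap Module Finset

section DivisionRing

variable {k V : Type*} [DivisionRing k] [AddCommGroup V] [Module k V] [FiniteDimensional k V]

theorem finrank_ker_inf_range_pow_add_finrank_range_pow_succ (f : V →ₗ[k] V) (i : ℕ) :
    finrank k ↥(ker f ⊓ range (f ^ i)) + finrank k ↥(range (f ^ (i + 1))) =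
      finrank k ↥(range (f ^ i)) := by
  have h := finrank_range_add_finrank_ker (f.domRestrict (range (f ^ i)))
  rw [range_domRestrict, ker_domRestrict, ← Submodule.finrank_map_subtype_eq,
    Submodule.map_comap_subtype, inf_comm] at h
  rw [pow_succ', Module.End.mul_eq_comp, range_comp]
  omega

theorem sum_finrank_ker_inf_range_pow_add_finrank_range_pow (f : V →ₗ[k] V) (n : ℕ) :
    ∑ i ∈ range n, finrank k ↥(ker f ⊓ range (f ^ i)) + finrank k ↥(range (f ^ n)) =
      finrank k V := by
  induction n with
  | zero =>
    rw [sum_range_zero, zero_add, pow_zero, Module.End.one_eq_id, LinearMap.range_id, finrank_top]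
  | succ n ih =>
    rw [sum_range_succ, add_assoc, finrank_ker_inf_range_pow_add_finrank_range_pow_succ, ih]

end DivisionRing

section Field

variable {k V : Type*} [Field k] [AddCommGroup V] [Module k V] [FiniteDimensional k V]

theorem finrank_phi_succ_add_finrank_ker_inf_range_pow_succ (x : V →ₗ[k] V) (j : ℕ) :
    finrank k (phi x (j + 1)) + finrank k ↥(ker x ⊓ range (x ^ (j + 1))) =
      finrank k ↥(ker x ⊓ range (x ^ j)) := by
  have hle : ker x ⊓ range (x ^ (j + 1)) ≤ ker x ⊓ range (x ^ j) := by
    refine inf_le_inf_left _ ?_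
    rw [pow_succ, Module.End.mul_eq_comp]
    exact range_comp_le_range _ _
  rw [← (Submodule.comapSubtypeEquivOfLe hle).finrank_eq]
  exact Submodule.finrank_quotient_add_finrank _

theorem sum_mul_finrank_phi_add_mul_finrank_ker_inf_range_pow (x : V →ₗ[k] V) (n : ℕ) :
    ∑ i ∈ Icc 1 n, i * finrank k (phi x i) + n * finrank k ↥(ker x ⊓ range (x ^ n)) =
      ∑ i ∈ range n, finrank k ↥(ker x ⊓ range (x ^ i)) := by
  induction n with
  | zero => simp
  | succ n ih =>
    rw [sum_Icc_succ_top (by omega), sum_range_succ, ← ih,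
      ← finrank_phi_succ_add_finrank_ker_inf_range_pow_succ x n]
    ring

theorem finrank_eq_sum_mul_finrank_phi_of_pow_eq_zero {x : V →ₗ[k] V} {n : ℕ}
    (hx : x ^ n = 0) :
    finrank k V = ∑ i ∈ Icc 1 n, i * finrank k (phi x i) := by
  have hrange : finrank k ↥(range (x ^ n)) = 0 := by rw [hx, LinearMap.range_zero, finrank_bot]
  have hker : finrank k ↥(ker x ⊓ range (x ^ n)) = 0 := by
    rw [hx, LinearMap.range_zero, inf_bot_eq, finrank_bot]
  rw [← sum_finrank_ker_inf_range_pow_add_finrank_range_pow x n, hrange, add_zero,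
    ← sum_mul_finrank_phi_add_mul_finrank_ker_inf_range_pow, hker, mul_zero, add_zero]

end Field

theorem stmt4_general (k : Type*) [Field k] (p : ℕ)
    (V : Type*) [AddCommGroup V] [Module k V] [FiniteDimensional k V]
    (x : V →ₗ[k] V) (hx : x ^ p = 0) :
    Module.finrank k V ≡
      ∑ i ∈ Finset.Icc 1 (p - 1), i * Module.finrank k (phi x i) [MOD p] := by
  rw [finrank_eq_sum_mul_finrank_phi_of_pow_eq_zero hx]
  cases p with
  | zero => rfl
  | succ n =>
    simp only [Nat.add_sub_cancel]
    rw [sum_Icc_succ_top (by omega)]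
    exact Nat.add_mul_mod_self_left _ _ _

/-- `dim_k V ≡ Σ_{i=1}^{p-1} i · dim_k φ_i(V,x) (mod p)`. -/
theorem stmt4 (k : Type*) [Field k] (p : ℕ) (hp : 0 < p)
    (V : Type*) [AddCommGroup V] [Module k V] [FiniteDimensional k V]
    (x : V →ₗ[k] V) (hx : x ^ p = 0) :
    Module.finrank k V ≡
      ∑ i ∈ Finset.Icc 1 (p - 1), i * Module.finrank k (phi x i) [MOD p] :=
  stmt4_general k p V x hx
end

section
/- Let p be a prime, n ≥ 1, and H a subgroup of the symmetric group Equiv.Perm (Fin n). Then the following are equivalent: (a) there exists a subgroup P ≤ H such that P is a p-group and the natural action of P on Fin n is transitive; (b) n is a power of p and the action of H on Fin n is transitive. -/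
open MulAction

lemma aux_orbit_stab {G : Type*} [Group G] [Finite G] {α : Type*} [MulAction G α] (a : α) :
    Nat.card (orbit G a) * Nat.card (stabilizer G a) = Nat.card G := by
  rw [← Nat.card_prod]
  exact Nat.card_congr (orbitProdStabilizerEquivGroup G a)

/-- for a subgroup `H ≤ S_n` (`p` prime, `n ≥ 1`), the following are
equivalent: (a) there is a subgroup `P ≤ H` which is a `p`-group acting transitively on
`Fin n`; (b) `n` is a power of `p` and `H` acts transitively on `Fin n`. -/
theorem stmt5 (p n : ℕ) (hp : p.Prime) (hn : 1 ≤ n)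
    (H : Subgroup (Equiv.Perm (Fin n))) :
    (∃ P : Subgroup (Equiv.Perm (Fin n)), P ≤ H ∧ IsPGroup p ↥P ∧
        ∀ a b : Fin n, ∃ g ∈ P, g a = b) ↔
      ((∃ r : ℕ, n = p ^ r) ∧ ∀ a b : Fin n, ∃ g ∈ H, g a = b) := by
  haveI : Fact p.Prime := ⟨hp⟩
  constructor
  · rintro ⟨P, hPH, hPp, htrans⟩
    refine ⟨?_, fun a b => (htrans a b).imp fun g hg => ⟨hPH hg.1, hg.2⟩⟩
    obtain ⟨k, hk⟩ := IsPGroup.iff_card.mp hPp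
    set a0 : Fin n := ⟨0, hn⟩
    have horb : orbit P a0 = Set.univ := by
      rw [Set.eq_univ_iff_forall]
      intro b
      obtain ⟨g, hg, hgb⟩ := htrans a0 b
      exact ⟨⟨g, hg⟩, hgb⟩
    have hcard : Nat.card (orbit P a0) = n := by
      rw [horb, Nat.card_congr (Equiv.Set.univ _), Nat.card_eq_fintype_card, Fintype.card_fin]
    have hdvd : Nat.card (orbit P a0) ∣ Nat.card P :=
      ⟨Nat.card (stabilizer P a0), (aux_orbit_stab a0).symm⟩
    rw [hcard, hk] at hdvd
    obtain ⟨r, _, hr⟩ := (Nat.dvd_prime_pow hp).mp hdvd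
    exact ⟨r, hr⟩
  · rintro ⟨⟨r, hr⟩, htrans⟩
    obtain ⟨Q⟩ : Nonempty (Sylow p H) := inferInstance
    refine ⟨(Q : Subgroup H).map H.subtype, Subgroup.map_subtype_le _,
      Q.isPGroup'.map _, fun a b => ?_⟩
    have horbH : orbit H a = Set.univ := by
      rw [Set.eq_univ_iff_forall]
      intro b
      obtain ⟨g, hg, hgb⟩ := htrans a b
      exact ⟨⟨g, hg⟩, hgb⟩
    have hcardH : Nat.card (orbit H a) = n := by
      rw [horbH, Nat.card_congr (Equiv.Set.univ _), Nat.card_eq_fintype_card, Fintype.card_fin]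
    have hH := aux_orbit_stab (G := H) a
    rw [hcardH] at hH
    obtain ⟨m, hm⟩ := IsPGroup.iff_card.mp ((Q.isPGroup').to_subgroup (stabilizer Q a))
    have hQcard : Nat.card Q = p ^ (Nat.card H).factorization p := Q.card_eq_multiplicity
    have hQ := aux_orbit_stab (G := Q) a
    rw [hm, hQcard] at hQ
    -- stab Q a injects into stab H a
    have hdvd : p ^ m ∣ Nat.card (stabilizer H a) := by
      rw [← hm]
      refine Subgroup.card_dvd_of_injective
        (⟨⟨fun g => ⟨((g : Q) : H), g.2⟩, rfl⟩, fun x y => rfl⟩ :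
          stabilizer Q a →* stabilizer H a) ?_
      intro x y hxy
      have h1 : (((x : Q) : H) : Equiv.Perm (Fin n)) = (((y : Q) : H) : Equiv.Perm (Fin n)) := by
        have := Subtype.ext_iff.mp hxy
        exact Subtype.ext_iff.mp this
      exact Subtype.ext (Subtype.ext (Subtype.ext h1))
    -- nonvanishing
    have hsH : Nat.card (stabilizer H a) ≠ 0 := Nat.card_pos.ne'
    have hm_le : m ≤ (Nat.card (stabilizer H a)).factorization p :=
      (Nat.Prime.pow_dvd_iff_le_factorization hp hsH).mp hdvd
    have hnfact : n.factorization p = r := by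
      rw [hr, Nat.Prime.factorization_pow hp]; simp
    have hfact : (Nat.card H).factorization p = r + (Nat.card (stabilizer H a)).factorization p := by
      rw [← hH, Nat.factorization_mul (by omega) hsH]
      simp [hnfact]
    have horbQcard : Nat.card (orbit Q a) =
        p ^ ((Nat.card H).factorization p - m) := by
      have hpm : (p : ℕ) ^ m ≠ 0 := pow_ne_zero _ hp.pos.ne'
      have : Nat.card (orbit Q a) * p ^ m = p ^ ((Nat.card H).factorization p - m) * p ^ m := by
        rw [hQ, ← pow_add, Nat.sub_add_cancel (by omega)]
      exact Nat.eq_of_mul_eq_mul_right (Nat.pos_of_ne_zero hpm) this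
    have hle : n ≤ Nat.card (orbit Q a) := by
      rw [horbQcard]
      calc n = p ^ r := hr
        _ ≤ p ^ ((Nat.card H).factorization p - m) :=
            Nat.pow_le_pow_right hp.pos (by omega)
    -- orbit Q a = univ
    have horbQ : orbit Q a = Set.univ := by
      apply Set.eq_of_subset_of_ncard_le (Set.subset_univ _)
      rw [Set.ncard_univ, ← Nat.card_coe_set_eq]
      simpa using hle
    have hb : b ∈ orbit Q a := horbQ ▸ Set.mem_univ b
    obtain ⟨g, hg⟩ := hb
    exact ⟨((g : H) : Equiv.Perm (Fin n)), Subgroup.mem_map.mpr ⟨(g : H), g.2, rfl⟩, hg⟩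
end

section
/- Let p be a prime, p^r a prime power, and n ≥ p^r. Let λ be a partition of n with ℓ parts and let H ≤ S_{p^r} be a subgroup whose action on B is transitive. Then there is a bijection e from the set (Tab^λ)^H of H-fixed points of Tab^λ to the disjoint union, over indices i ∈ Fin ℓ with λ_i ≥ p^r, of the sets Tab^{λ − p^r e_i}, where Tab^{λ − p^r e_i} denotes the set of functions g : Fin (n − p^r) → Fin ℓ whose fiber over j has cardinality λ_j − p^r if j = i and λ_j otherwise. Moreover, identifying Fin (n − p^r) with Fin n ∖ B, the bijection e can be chosen to be S_{n−p^r}-equivariant: e(σ · f) = σ · e(f) for all σ ∈ S_{n−p^r} and all f ∈ (Tab^λ)^H. -/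
/-!
Since `H` is transitive on the block `B` of the last `p^r` points, an `H`-fixed function
`Fin n → Fin ℓ` is constant on `B`; conversely, as `H` fixes the complement of `B` pointwise
and hence stabilises `B`, every function constant on `B` is `H`-fixed. A tableau of shape `λ`
that takes the constant value `i` on `B` is the same as the index `i` (necessarily with
`λ_i ≥ p^r`) together with its restriction to the complement of `B`, a tableau of shape
`λ − p^r e_i`. Restriction commutes with every permutation fixing `B` pointwise.
-/

/-- `f : Fin n → Fin ℓ` is a tableau of shape `lam`: the fiber over `i` has
cardinality `lam i`. -/
def TabP {n ℓ : ℕ} (lam : Fin ℓ → ℕ) (f : Fin n → Fin ℓ) : Prop :=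
  ∀ i : Fin ℓ, (Finset.univ.filter fun a => f a = i).card = lam i

open Finset

section Invariant

variable {X α : Type*} {H : Subgroup (Equiv.Perm X)} {B : Set X}

lemma apply_mem_of_forall_notMem_apply_eq (hH : ∀ σ ∈ H, ∀ a ∉ B, σ a = a)
    {σ : Equiv.Perm X} (hσ : σ ∈ H) {a : X} (ha : a ∈ B) : σ a ∈ B := by
  by_contra h
  rw [σ.injective (hH σ hσ (σ a) h)] at h
  exact h ha

theorem forall_comp_inv_eq_iff_const_on (hH : ∀ σ ∈ H, ∀ a ∉ B, σ a = a)
    (htrans : ∀ a ∈ B, ∀ b ∈ B, ∃ σ ∈ H, σ a = b) (f : X → α) :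
    (∀ σ ∈ H, f ∘ ⇑σ⁻¹ = f) ↔ ∀ a ∈ B, ∀ b ∈ B, f a = f b := by
  constructor
  · intro hf a ha b hb
    obtain ⟨σ, hσ, rfl⟩ := htrans a ha b hb
    calc f a = f (σ⁻¹ (σ a)) := by simp
      _ = f (σ a) := congrFun (hf σ hσ) (σ a)
  · intro hf σ hσ
    funext a
    by_cases ha : a ∈ B
    · exact hf _ (apply_mem_of_forall_notMem_apply_eq hH (inv_mem hσ) ha) a ha
    · exact congrArg f (hH _ (inv_mem hσ) a ha)

end Invariant

section Tail

variable {α : Type*} {n k : ℕ}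

lemma card_fiber_eq_card_fiber_castLE_add [DecidableEq α] (hkn : k ≤ n) {f : Fin n → α} {x : α}
    (hf : ∀ a : Fin n, n - k ≤ (a : ℕ) → f a = x) (j : α) :
    #{a | f a = j} = #{b | f (Fin.castLE (Nat.sub_le n k) b) = j} + if j = x then k else 0 := by
  rw [← card_filter_add_card_filter_not (p := fun a : Fin n => (a : ℕ) < n - k),
    filter_filter, filter_filter]
  congr 1
  · rw [← card_map (Fin.castLEEmb (Nat.sub_le n k))]
    congr 1
    ext a
    simp only [mem_filter, mem_univ, true_and, mem_map, Fin.castLEEmb_apply]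
    constructor
    · rintro ⟨hfa, ha⟩
      exact ⟨⟨a, ha⟩, hfa, rfl⟩
    · rintro ⟨b, hb, rfl⟩
      exact ⟨hb, b.isLt⟩
  · split_ifs with hj
    · subst hj
      rw [filter_congr fun a _ => and_iff_right_of_imp fun ha => hf a (not_lt.1 ha), filter_not,
        card_univ_sdiff, Fintype.card_fin, Fin.card_filter_val_lt]
      omega
    · rw [card_eq_zero, filter_eq_empty_iff]
      rintro a - ⟨rfl, ha⟩
      exact hj (hf a (not_lt.1 ha))

variable {ℓ : ℕ} {lam : Fin ℓ → ℕ}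

lemma tabP_iff_of_eq_on_tail (hkn : k ≤ n) {f : Fin n → Fin ℓ} {x : Fin ℓ}
    (hf : ∀ a : Fin n, n - k ≤ (a : ℕ) → f a = x) :
    TabP lam f ↔ k ≤ lam x ∧ ∀ j, #{b | f (Fin.castLE (Nat.sub_le n k) b) = j} =
      if j = x then lam j - k else lam j := by
  have hcard := card_fiber_eq_card_fiber_castLE_add hkn hf
  constructor
  · intro htab
    refine ⟨?_, fun j => ?_⟩
    · have := hcard x
      rw [htab, if_pos rfl] at this
      omega
    · have := hcard j
      rw [htab] at this
      split_ifs at this ⊢ <;> omega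
  · rintro ⟨hx, hrestr⟩ j
    rw [hcard, hrestr]
    split_ifs with hj
    · subst hj
      omega
    · rfl

def extendTail (g : Fin (n - k) → α) (x : α) (a : Fin n) : α :=
  if h : (a : ℕ) < n - k then g ⟨a, h⟩ else x

@[simp]
lemma extendTail_castLE (g : Fin (n - k) → α) (x : α) (b : Fin (n - k)) :
    extendTail g x (Fin.castLE (Nat.sub_le n k) b) = g b :=
  dif_pos b.isLt

lemma extendTail_of_le (g : Fin (n - k) → α) (x : α) {a : Fin n} (ha : n - k ≤ (a : ℕ)) :
    extendTail g x a = x :=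
  dif_neg (not_lt.2 ha)

def tailStart (hk : 0 < k) (hkn : k ≤ n) : Fin n :=
  ⟨n - k, Nat.sub_lt (hk.trans_le hkn) hk⟩

def tailConstTabEquiv (hk : 0 < k) (hkn : k ≤ n) (lam : Fin ℓ → ℕ) :
    {f : Fin n → Fin ℓ // TabP lam f ∧
        ∀ a : Fin n, n - k ≤ (a : ℕ) → ∀ b : Fin n, n - k ≤ (b : ℕ) → f a = f b} ≃
      Σ i : {i : Fin ℓ // k ≤ lam i}, {g : Fin (n - k) → Fin ℓ //
        ∀ j : Fin ℓ, #{a | g a = j} = if j = i.1 then lam j - k else lam j} where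
  toFun f :=
    have hf a ha := f.2.2 a ha (tailStart hk hkn) le_rfl
    ⟨⟨f.1 (tailStart hk hkn), ((tabP_iff_of_eq_on_tail hkn hf).1 f.2.1).1⟩,
      ⟨f.1 ∘ Fin.castLE (Nat.sub_le n k), ((tabP_iff_of_eq_on_tail hkn hf).1 f.2.1).2⟩⟩
  invFun x :=
    have hf a ha := extendTail_of_le x.2.1 x.1.1 ha
    ⟨extendTail x.2.1 x.1.1,
      (tabP_iff_of_eq_on_tail hkn hf).2 ⟨x.1.2, by simpa using x.2.2⟩,
      fun a ha b hb => by rw [hf a ha, hf b hb]⟩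
  left_inv f := by
    refine Subtype.ext (funext fun a => ?_)
    by_cases ha : (a : ℕ) < n - k
    · exact dif_pos ha
    · exact (extendTail_of_le _ _ (not_lt.1 ha)).trans
        (f.2.2 (tailStart hk hkn) le_rfl a (not_lt.1 ha))
  right_inv x := Sigma.subtype_ext (Subtype.ext (extendTail_of_le _ _ le_rfl))
    (funext (extendTail_castLE _ _))

end Tail

theorem stmt6_general (p r n ℓ : ℕ) (hp : p.Prime) (hn : p ^ r ≤ n)
    (lam : Fin ℓ → ℕ)
    (H : Subgroup (Equiv.Perm (Fin n)))
    -- `H ≤ S_{p^r}`: elements of `H` fix the complement of the last `p^r` points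
    (hH : ∀ σ ∈ H, ∀ a : Fin n, (a : ℕ) < n - p ^ r → σ a = a)
    -- the action of `H` on the last `p^r` points is transitive
    (htrans : ∀ a b : Fin n, n - p ^ r ≤ (a : ℕ) → n - p ^ r ≤ (b : ℕ) →
      ∃ σ ∈ H, σ a = b) :
    ∃ e : {f : Fin n → Fin ℓ // TabP lam f ∧ ∀ σ ∈ H, f ∘ ⇑σ⁻¹ = f} ≃
        Σ i : {i : Fin ℓ // p ^ r ≤ lam i},
          {g : Fin (n - p ^ r) → Fin ℓ //
            ∀ j : Fin ℓ, (Finset.univ.filter fun a => g a = j).card =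
              if j = i.1 then lam j - p ^ r else lam j},
      -- equivariance for the subgroup `S_{n-p^r}` fixing the last `p^r` points:
      -- if `τ` is the permutation of `Fin (n - p^r)` obtained by restricting `σ` along
      -- the identification of `Fin (n - p^r)` with `Fin n ∖ B`, then `e (σ • f) = σ • e f`
      ∀ σ : Equiv.Perm (Fin n), (∀ a : Fin n, n - p ^ r ≤ (a : ℕ) → σ a = a) →
        ∀ τ : Equiv.Perm (Fin (n - p ^ r)),
          (∀ j : Fin (n - p ^ r),
            σ (Fin.castLE (Nat.sub_le n (p ^ r)) j) =
              Fin.castLE (Nat.sub_le n (p ^ r)) (τ j)) →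
          ∀ (f : {f : Fin n → Fin ℓ // TabP lam f ∧ ∀ σ ∈ H, f ∘ ⇑σ⁻¹ = f})
            (hf' : TabP lam (f.1 ∘ ⇑σ⁻¹) ∧ ∀ σ' ∈ H, (f.1 ∘ ⇑σ⁻¹) ∘ ⇑σ'⁻¹ = f.1 ∘ ⇑σ⁻¹),
            (e ⟨f.1 ∘ ⇑σ⁻¹, hf'⟩).1 = (e f).1 ∧
            ∀ j : Fin (n - p ^ r),
              ((e ⟨f.1 ∘ ⇑σ⁻¹, hf'⟩).2).1 j = ((e f).2).1 (τ⁻¹ j) := by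
  have hinvariant (f : Fin n → Fin ℓ) : (∀ σ ∈ H, f ∘ ⇑σ⁻¹ = f) ↔
      ∀ a : Fin n, n - p ^ r ≤ (a : ℕ) → ∀ b : Fin n, n - p ^ r ≤ (b : ℕ) → f a = f b :=
    forall_comp_inv_eq_iff_const_on (B := {a : Fin n | n - p ^ r ≤ (a : ℕ)})
      (fun σ hσ a ha => hH σ hσ a (not_le.1 ha))
      (fun a ha b hb => htrans a b ha hb) f
  refine ⟨(Equiv.subtypeEquivRight fun f => and_congr_right' (hinvariant f)).trans
    (tailConstTabEquiv (pow_pos hp.pos r) hn lam), ?_⟩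
  intro σ hσ τ hτ f hf'
  refine ⟨Subtype.ext (congrArg f.1 ?_), fun j => congrArg f.1 ?_⟩
  · exact Equiv.Perm.inv_eq_iff_eq.2 (hσ _ le_rfl).symm
  · rw [Equiv.Perm.inv_eq_iff_eq, hτ, ← Equiv.Perm.mul_apply, mul_inv_cancel, Equiv.Perm.one_apply]

/-- for a partition `λ` of `n` and a transitive subgroup `H ≤ S_{p^r}`,
there is an `S_{n−p^r}`-equivariant bijection from the `H`-fixed points of `Tab^λ`
to the disjoint union over `i` with `λ_i ≥ p^r` of the sets `Tab^{λ − p^r e_i}`. -/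
theorem stmt6 (p r n ℓ : ℕ) (hp : p.Prime) (hn : p ^ r ≤ n)
    (lam : Fin ℓ → ℕ) (hanti : Antitone lam) (hpos : ∀ i, 0 < lam i)
    (hsum : ∑ i, lam i = n)
    (H : Subgroup (Equiv.Perm (Fin n)))
    -- `H ≤ S_{p^r}`: elements of `H` fix the complement of the last `p^r` points
    (hH : ∀ σ ∈ H, ∀ a : Fin n, (a : ℕ) < n - p ^ r → σ a = a)
    -- the action of `H` on the last `p^r` points is transitive
    (htrans : ∀ a b : Fin n, n - p ^ r ≤ (a : ℕ) → n - p ^ r ≤ (b : ℕ) →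
      ∃ σ ∈ H, σ a = b) :
    ∃ e : {f : Fin n → Fin ℓ // TabP lam f ∧ ∀ σ ∈ H, f ∘ ⇑σ⁻¹ = f} ≃
        Σ i : {i : Fin ℓ // p ^ r ≤ lam i},
          {g : Fin (n - p ^ r) → Fin ℓ //
            ∀ j : Fin ℓ, (Finset.univ.filter fun a => g a = j).card =
              if j = i.1 then lam j - p ^ r else lam j},
      -- equivariance for the subgroup `S_{n-p^r}` fixing the last `p^r` points:
      -- if `τ` is the permutation of `Fin (n - p^r)` obtained by restricting `σ` along
      -- the identification of `Fin (n - p^r)` with `Fin n ∖ B`, then `e (σ • f) = σ • e f`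
      ∀ σ : Equiv.Perm (Fin n), (∀ a : Fin n, n - p ^ r ≤ (a : ℕ) → σ a = a) →
        ∀ τ : Equiv.Perm (Fin (n - p ^ r)),
          (∀ j : Fin (n - p ^ r),
            σ (Fin.castLE (Nat.sub_le n (p ^ r)) j) =
              Fin.castLE (Nat.sub_le n (p ^ r)) (τ j)) →
          ∀ (f : {f : Fin n → Fin ℓ // TabP lam f ∧ ∀ σ ∈ H, f ∘ ⇑σ⁻¹ = f})
            (hf' : TabP lam (f.1 ∘ ⇑σ⁻¹) ∧ ∀ σ' ∈ H, (f.1 ∘ ⇑σ⁻¹) ∘ ⇑σ'⁻¹ = f.1 ∘ ⇑σ⁻¹),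
            (e ⟨f.1 ∘ ⇑σ⁻¹, hf'⟩).1 = (e f).1 ∧
            ∀ j : Fin (n - p ^ r),
              ((e ⟨f.1 ∘ ⇑σ⁻¹, hf'⟩).2).1 j = ((e f).2).1 (τ⁻¹ j) :=
  stmt6_general p r n ℓ hp hn lam H hH htrans
end

section
/- Let p be a prime, p^r a prime power, and n ≥ p^r. Let λ be a partition of n and let H ≤ S_{p^r} be a subgroup whose action on B is transitive. Then the action of S_{n−p^r} on the set (Tab^λ)^H of H-fixed points of Tab^λ has exactly one orbit if and only if λ is p^r-quasistable, i.e. λ_1 ≥ p^r and λ_2 < p^r (where λ_2 := 0 if λ has a single part). -/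
open Finset
open scoped Pointwise

namespace Equiv.Perm

variable {α β : Type*}

theorem exists_comp_eq_of_card_fiber_eq [Fintype α] [DecidableEq β] {f g : α → β}
    (h : ∀ i, Fintype.card {x // f x = i} = Fintype.card {x // g x = i}) :
    ∃ σ : Perm α, g ∘ σ = f := by
  let e i : {x // f x = i} ≃ {x // g x = i} := Fintype.equivOfCardEq (h i)
  exact ⟨(sigmaFiberEquiv f).symm.trans ((Equiv.sigmaCongrRight e).trans (sigmaFiberEquiv g)),
    funext fun x => (e (f x) ⟨x, rfl⟩).2⟩

theorem exists_comp_eq_of_eqOn_of_card_fiber_eq [Fintype α] [DecidableEq α]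
    [DecidableEq β] {f g : α → β} {s : Finset α} (hfg : Set.EqOn f g s)
    (h : ∀ i, #{x | f x = i} = #{x | g x = i}) :
    ∃ σ : Perm α, (∀ a ∈ s, σ a = a) ∧ g ∘ σ = f := by
  have hout : ∀ i, #{x | x ∉ s ∧ f x = i} = #{x | x ∉ s ∧ g x = i} := by
    intro i
    have hin : #{x | x ∈ s ∧ f x = i} = #{x | x ∈ s ∧ g x = i} :=
      congrArg card (filter_congr fun x _ => and_congr_right fun hx => by rw [hfg hx])
    have hf := card_filter_add_card_filter_not (s := {x | f x = i}) (· ∈ s)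
    have hg := card_filter_add_card_filter_not (s := {x | g x = i}) (· ∈ s)
    simp only [filter_filter, and_comm (a := _ = i)] at hf hg
    have := h i
    omega
  have hcard : ∀ i, Fintype.card {x : {a // a ∉ s} // f x = i}
      = Fintype.card {x : {a // a ∉ s} // g x = i} := fun i => by
    rw [Fintype.card_congr (subtypeSubtypeEquivSubtypeInter (· ∉ s) (f · = i)),
      Fintype.card_congr (subtypeSubtypeEquivSubtypeInter (· ∉ s) (g · = i)),
      Fintype.card_subtype, Fintype.card_subtype, hout]
  obtain ⟨τ, hτ⟩ := exists_comp_eq_of_card_fiber_eq hcard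
  refine ⟨ofSubtype τ, fun a ha => ofSubtype_apply_of_not_mem τ (not_not.mpr ha),
    funext fun a => ?_⟩
  by_cases ha : a ∈ s
  · simp [ofSubtype_apply_of_not_mem τ (not_not.mpr ha), hfg ha]
  · simpa [ofSubtype_apply_of_mem τ ha] using congrFun hτ ⟨a, ha⟩

theorem exists_forall_mem_apply_mem_of_card_le [DecidableEq α] {s t : Finset α}
    (h : #s ≤ #t) : ∃ σ : Perm α, ∀ a ∈ s, σ a ∈ t := by
  obtain ⟨t', ht't, ht'⟩ := exists_subset_card_eq h
  obtain ⟨σ, hσ⟩ := (Set.powersetCard.isPretransitive (α := α) (n := #s)).exists_smul_eq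
    (Set.powersetCard.ofCard rfl) (Set.powersetCard.ofCard ht')
  have hσ' : σ • s = t' := congrArg Subtype.val hσ
  exact ⟨σ, fun a ha => ht't (hσ' ▸ smul_mem_smul_finset ha)⟩

theorem comp_eq_self_of_forall_notMem {σ : Perm α} {s : Set α} {f : α → β} {j : β}
    (hσ : ∀ a ∉ s, σ a = a) (hf : ∀ a ∈ s, f a = j) : f ∘ σ = f := by
  funext a
  by_cases ha : a ∈ s
  · have hσa : σ a ∈ s := by
      by_contra hσa
      exact hσa (by rwa [σ.injective (hσ _ hσa)])
    simp [hf _ ha, hf _ hσa]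
  · simp [hσ a ha]

theorem apply_eq_of_comp_inv_eq {σ : Perm α} {f g : α → β} {a : α}
    (hfg : f ∘ ⇑σ⁻¹ = g) (ha : σ a = a) : f a = g a := by
  rw [← hfg, Function.comp_apply, inv_eq_iff_eq.mpr ha.symm]

end Equiv.Perm

namespace Subgroup

variable {α β : Type*} {H : Subgroup (Equiv.Perm α)} {s : Set α}

theorem apply_eq_of_forall_comp_inv_eq (htrans : ∀ a ∈ s, ∀ b ∈ s, ∃ σ ∈ H, σ a = b)
    {f : α → β} (hf : ∀ σ ∈ H, f ∘ ⇑σ⁻¹ = f) {a b : α} (ha : a ∈ s) (hb : b ∈ s) :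
    f a = f b := by
  obtain ⟨σ, hσ, rfl⟩ := htrans a ha b hb
  simpa using congrFun (hf σ hσ) (σ a)

theorem forall_comp_inv_eq_iff (hH : ∀ σ ∈ H, ∀ a ∉ s, σ a = a)
    (htrans : ∀ a ∈ s, ∀ b ∈ s, ∃ σ ∈ H, σ a = b) (hs : s.Nonempty) {f : α → β} :
    (∀ σ ∈ H, f ∘ ⇑σ⁻¹ = f) ↔ ∃ j, ∀ a ∈ s, f a = j := by
  obtain ⟨b, hb⟩ := hs
  refine ⟨fun hf => ⟨f b, fun a ha => apply_eq_of_forall_comp_inv_eq htrans hf ha hb⟩,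
    fun ⟨j, hj⟩ σ hσ => ?_⟩
  exact Equiv.Perm.comp_eq_self_of_forall_notMem (hH _ (inv_mem hσ)) hj

end Subgroup

theorem Fin.card_filter_sub_le_val {n c : ℕ} (h : c ≤ n) :
    #{a : Fin n | n - c ≤ (a : ℕ)} = c := by
  have hmap : ({a : Fin n | n - c ≤ (a : ℕ)} : Finset _).map valEmbedding = Ico (n - c) n := by
    ext x
    simp only [mem_map, mem_filter, mem_univ, true_and, valEmbedding_apply, mem_Ico]
    exact ⟨by rintro ⟨a, ha, rfl⟩; exact ⟨ha, a.2⟩, fun hx => ⟨⟨x, hx.2⟩, hx.1, rfl⟩⟩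
  rw [← card_map, hmap, Nat.card_Ico]
  omega

section Tableau

variable {n ℓ : ℕ} {lam : Fin ℓ → ℕ}

theorem TabP.comp_perm {f : Fin n → Fin ℓ} (hf : TabP lam f) (σ : Equiv.Perm (Fin n)) :
    TabP lam (f ∘ σ) := fun i => by
  rw [← hf i, ← Fintype.card_subtype, ← Fintype.card_subtype]
  exact Fintype.card_congr (σ.subtypeEquiv fun _ => Iff.rfl)

theorem exists_tabP (hsum : ∑ i, lam i = n) : ∃ f : Fin n → Fin ℓ, TabP lam f := by
  let e : Fin n ≃ Σ i, Fin (lam i) := (finCongr hsum.symm).trans finSigmaFinEquiv.symm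
  refine ⟨fun a => (e a).1, fun i => ?_⟩
  rw [← Fintype.card_subtype, Fintype.card_congr ((e.subtypeEquiv fun _ => Iff.rfl).trans
    (Equiv.sigmaSubtype i)), Fintype.card_fin]

theorem exists_tabP_forall_mem_eq (hsum : ∑ i, lam i = n) {s : Finset (Fin n)} {j : Fin ℓ}
    (hs : #s ≤ lam j) : ∃ f : Fin n → Fin ℓ, TabP lam f ∧ ∀ a ∈ s, f a = j := by
  obtain ⟨f, hf⟩ := exists_tabP hsum
  obtain ⟨σ, hσ⟩ := Equiv.Perm.exists_forall_mem_apply_mem_of_card_le (hs.trans_eq (hf j).symm)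
  exact ⟨f ∘ σ, hf.comp_perm σ, fun a ha => (mem_filter.mp (hσ a ha)).2⟩

theorem TabP.card_le_of_forall_mem_eq {f : Fin n → Fin ℓ} (hf : TabP lam f)
    {s : Finset (Fin n)} {j : Fin ℓ} (hs : ∀ a ∈ s, f a = j) : #s ≤ lam j :=
  hf j ▸ card_le_card fun a ha => mem_filter.mpr ⟨mem_univ a, hs a ha⟩

theorem TabP.exists_perm_comp_inv_eq_of_eqOn {f g : Fin n → Fin ℓ} (hf : TabP lam f)
    (hg : TabP lam g) {s : Finset (Fin n)} (hfg : Set.EqOn f g s) :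
    ∃ σ : Equiv.Perm (Fin n), (∀ a ∈ s, σ a = a) ∧ f ∘ ⇑σ⁻¹ = g := by
  obtain ⟨σ, hσs, hσ⟩ := Equiv.Perm.exists_comp_eq_of_eqOn_of_card_fiber_eq
    hfg fun i => (hf i).trans (hg i).symm
  refine ⟨σ, hσs, ?_⟩
  rw [← hσ, Function.comp_assoc, ← Equiv.Perm.coe_mul, mul_inv_cancel, Equiv.Perm.coe_one,
    Function.comp_id]

end Tableau

theorem quasistable_iff_existsUnique {ℓ : ℕ} {lam : Fin ℓ → ℕ} (hanti : Antitone lam)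
    (hl : 0 < ℓ) (c : ℕ) :
    (c ≤ lam ⟨0, hl⟩ ∧ ∀ h1 : 1 < ℓ, lam ⟨1, h1⟩ < c) ↔ ∃! j, c ≤ lam j := by
  constructor
  · rintro ⟨h0, h1⟩
    refine ⟨⟨0, hl⟩, h0, fun j hj => Fin.ext (Nat.eq_zero_of_not_pos fun hpos => ?_)⟩
    have h1ℓ : 1 < ℓ := lt_of_le_of_lt hpos j.2
    exact absurd (hj.trans (hanti (Fin.mk_le_of_le_val hpos))) (h1 h1ℓ).not_ge
  · rintro ⟨j, hj, huniq⟩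
    have h0 : c ≤ lam ⟨0, hl⟩ := hj.trans (hanti (Fin.mk_le_of_le_val (Nat.zero_le _)))
    refine ⟨h0, fun h1 => lt_of_not_ge fun hc => ?_⟩
    exact one_ne_zero (congrArg Fin.val ((huniq _ hc).trans (huniq _ h0).symm))

theorem stmt7_general (p r n ℓ : ℕ) (hp : p.Prime) (hn : p ^ r ≤ n) (hl : 0 < ℓ)
    (lam : Fin ℓ → ℕ) (hanti : Antitone lam)
    (hsum : ∑ i, lam i = n)
    (H : Subgroup (Equiv.Perm (Fin n)))
    (hH : ∀ σ ∈ H, ∀ a : Fin n, (a : ℕ) < n - p ^ r → σ a = a)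
    (htrans : ∀ a b : Fin n, n - p ^ r ≤ (a : ℕ) → n - p ^ r ≤ (b : ℕ) →
      ∃ σ ∈ H, σ a = b) :
    (({f : Fin n → Fin ℓ | TabP lam f ∧ ∀ σ ∈ H, f ∘ ⇑σ⁻¹ = f}).Nonempty ∧
      ∀ f ∈ {f : Fin n → Fin ℓ | TabP lam f ∧ ∀ σ ∈ H, f ∘ ⇑σ⁻¹ = f},
        ∀ g ∈ {f : Fin n → Fin ℓ | TabP lam f ∧ ∀ σ ∈ H, f ∘ ⇑σ⁻¹ = f},
          ∃ σ : Equiv.Perm (Fin n),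
            (∀ a : Fin n, n - p ^ r ≤ (a : ℕ) → σ a = a) ∧ f ∘ ⇑σ⁻¹ = g) ↔
      (p ^ r ≤ lam ⟨0, hl⟩ ∧ ∀ h1 : 1 < ℓ, lam ⟨1, h1⟩ < p ^ r) := by
  set B : Finset (Fin n) := {a | n - p ^ r ≤ (a : ℕ)}
  have hmemB (a : Fin n) : a ∈ B ↔ n - p ^ r ≤ (a : ℕ) := by simp [B]
  have hBcard : #B = p ^ r := Fin.card_filter_sub_le_val hn
  obtain ⟨b, hb⟩ : B.Nonempty := card_pos.mp (hBcard ▸ pow_pos hp.pos r)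
  have fixed_iff (f : Fin n → Fin ℓ) : (∀ σ ∈ H, f ∘ ⇑σ⁻¹ = f) ↔ ∃ j, ∀ a ∈ B, f a = j :=
    Subgroup.forall_comp_inv_eq_iff (s := B)
      (fun σ hσ a ha => hH σ hσ a (lt_of_not_ge (mt (hmemB a).mpr ha)))
      (fun a ha b hb => htrans a b ((hmemB a).mp ha) ((hmemB b).mp hb)) ⟨b, hb⟩
  simp only [Set.Nonempty, Set.mem_ofPred_eq, fixed_iff, ← hmemB]
  rw [quasistable_iff_existsUnique hanti hl, ← hBcard]
  constructor
  · rintro ⟨⟨f, hf, j, hfj⟩, horbit⟩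
    refine ⟨j, hf.card_le_of_forall_mem_eq hfj, fun j' hj' => ?_⟩
    obtain ⟨g, hg, hgj'⟩ := exists_tabP_forall_mem_eq hsum hj'
    obtain ⟨σ, hσB, hσ⟩ := horbit g ⟨hg, j', hgj'⟩ f ⟨hf, j, hfj⟩
    rw [← hgj' b hb, ← hfj b hb]
    exact Equiv.Perm.apply_eq_of_comp_inv_eq hσ (hσB b hb)
  · rintro ⟨j, hj, huniq⟩
    obtain ⟨f₀, hf₀, hf₀j⟩ := exists_tabP_forall_mem_eq hsum hj
    refine ⟨⟨f₀, hf₀, j, hf₀j⟩, ?_⟩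
    rintro f ⟨hf, jf, hfj⟩ g ⟨hg, jg, hgj⟩
    obtain rfl := huniq jf (hf.card_le_of_forall_mem_eq hfj)
    obtain rfl := huniq jg (hg.card_le_of_forall_mem_eq hgj)
    exact hf.exists_perm_comp_inv_eq_of_eqOn hg fun a ha => (hfj a ha).trans (hgj a ha).symm

/-- for a partition `λ` of `n` and a transitive subgroup `H ≤ S_{p^r}`,
the `S_{n−p^r}`-action on the `H`-fixed points of `Tab^λ` has exactly one orbit iff
`λ` is `p^r`-quasistable, i.e. `λ_1 ≥ p^r` and `λ_2 < p^r` (with `λ_2 := 0` if `λ`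
has a single part). -/
theorem stmt7 (p r n ℓ : ℕ) (hp : p.Prime) (hn : p ^ r ≤ n) (hl : 0 < ℓ)
    (lam : Fin ℓ → ℕ) (hanti : Antitone lam) (hpos : ∀ i, 0 < lam i)
    (hsum : ∑ i, lam i = n)
    (H : Subgroup (Equiv.Perm (Fin n)))
    (hH : ∀ σ ∈ H, ∀ a : Fin n, (a : ℕ) < n - p ^ r → σ a = a)
    (htrans : ∀ a b : Fin n, n - p ^ r ≤ (a : ℕ) → n - p ^ r ≤ (b : ℕ) →
      ∃ σ ∈ H, σ a = b) :
    (({f : Fin n → Fin ℓ | TabP lam f ∧ ∀ σ ∈ H, f ∘ ⇑σ⁻¹ = f}).Nonempty ∧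
      ∀ f ∈ {f : Fin n → Fin ℓ | TabP lam f ∧ ∀ σ ∈ H, f ∘ ⇑σ⁻¹ = f},
        ∀ g ∈ {f : Fin n → Fin ℓ | TabP lam f ∧ ∀ σ ∈ H, f ∘ ⇑σ⁻¹ = f},
          ∃ σ : Equiv.Perm (Fin n),
            (∀ a : Fin n, n - p ^ r ≤ (a : ℕ) → σ a = a) ∧ f ∘ ⇑σ⁻¹ = g) ↔
      (p ^ r ≤ lam ⟨0, hl⟩ ∧ ∀ h1 : 1 < ℓ, lam ⟨1, h1⟩ < p ^ r) :=
  stmt7_general p r n ℓ hp hn hl lam hanti hsum H hH htrans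
end

section
/- Let p be a prime, p^r a prime power, and n ≥ p^r. Let λ and μ be p^r-stable partitions of n, with ℓ and m parts respectively. Then for every s ∈ Tab^λ and every t ∈ Tab^μ, the pair (0,0) ∈ Fin ℓ × Fin m is the unique pair (i,j) such that the cardinality of s⁻¹(i) ∩ t⁻¹(j) is at least p^r; that is, |s⁻¹(0) ∩ t⁻¹(0)| ≥ p^r, and |s⁻¹(i) ∩ t⁻¹(j)| < p^r whenever (i,j) ≠ (0,0). -/
/-- if `λ, μ` are `p^r`-stable partitions of `n` and `s ∈ Tab^λ`,
`t ∈ Tab^μ`, then `(0,0)` is the unique pair `(i,j)` with `|s⁻¹(i) ∩ t⁻¹(j)| ≥ p^r`. -/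
theorem stmt8 (p r n ℓ m : ℕ) (hp : p.Prime) (hn : p ^ r ≤ n)
    (hl : 0 < ℓ) (hm : 0 < m)
    (lam : Fin ℓ → ℕ) (hlanti : Antitone lam) (hlpos : ∀ i, 0 < lam i)
    (hlsum : ∑ i, lam i = n)
    -- `λ` is `p^r`-stable
    (hlstab : n - lam ⟨0, hl⟩ < p ^ r ∧ n + p ^ r ≤ 2 * lam ⟨0, hl⟩)
    (mu : Fin m → ℕ) (hmanti : Antitone mu) (hmpos : ∀ j, 0 < mu j)
    (hmsum : ∑ j, mu j = n)
    -- `μ` is `p^r`-stable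
    (hmstab : n - mu ⟨0, hm⟩ < p ^ r ∧ n + p ^ r ≤ 2 * mu ⟨0, hm⟩)
    (s : Fin n → Fin ℓ) (hs : TabP lam s)
    (t : Fin n → Fin m) (ht : TabP mu t) :
    p ^ r ≤ (Finset.univ.filter fun a => s a = ⟨0, hl⟩ ∧ t a = ⟨0, hm⟩).card ∧
    ∀ (i : Fin ℓ) (j : Fin m), ¬(i = ⟨0, hl⟩ ∧ j = ⟨0, hm⟩) →
      (Finset.univ.filter fun a => s a = i ∧ t a = j).card < p ^ r := by
  classical
  have hle : ∀ (i : Fin ℓ), lam i ≤ n := by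
    intro i
    rw [← hlsum]
    exact Finset.single_le_sum (fun j _ => Nat.zero_le _) (Finset.mem_univ i)
  have hme : ∀ (j : Fin m), mu j ≤ n := by
    intro j
    rw [← hmsum]
    exact Finset.single_le_sum (fun j _ => Nat.zero_le _) (Finset.mem_univ j)
  constructor
  · have hA := hs ⟨0, hl⟩
    have hB := ht ⟨0, hm⟩
    set A := Finset.univ.filter fun a => s a = ⟨0, hl⟩ with hAdef
    set B := Finset.univ.filter fun a => t a = ⟨0, hm⟩ with hBdef
    have hfilt : (Finset.univ.filter fun a => s a = ⟨0, hl⟩ ∧ t a = ⟨0, hm⟩)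
        = A ∩ B := by
      rw [hAdef, hBdef, ← Finset.filter_and]
    rw [hfilt]
    have hunion : (A ∪ B).card ≤ n := by
      calc (A ∪ B).card ≤ (Finset.univ : Finset (Fin n)).card :=
            Finset.card_le_card (Finset.subset_univ _)
        _ = n := by simp
    have hiu : (A ∪ B).card + (A ∩ B).card = A.card + B.card :=
      Finset.card_union_add_card_inter A B
    omega
  · intro i j hij
    have key : ∀ (i : Fin ℓ), i ≠ ⟨0, hl⟩ → lam i < p ^ r := by
      intro i hi
      have hsub : ({⟨0, hl⟩, i} : Finset (Fin ℓ)) ⊆ Finset.univ :=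
        Finset.subset_univ _
      have hsum2 : lam ⟨0, hl⟩ + lam i ≤ n := by
        rw [← hlsum]
        calc lam ⟨0, hl⟩ + lam i = ∑ k ∈ ({⟨0, hl⟩, i} : Finset (Fin ℓ)), lam k := by
              rw [Finset.sum_pair (Ne.symm hi)]
          _ ≤ ∑ k, lam k :=
              Finset.sum_le_sum_of_subset_of_nonneg hsub (fun _ _ _ => Nat.zero_le _)
      have := hlstab.1
      omega
    have keym : ∀ (j : Fin m), j ≠ ⟨0, hm⟩ → mu j < p ^ r := by
      intro j hj
      have hsub : ({⟨0, hm⟩, j} : Finset (Fin m)) ⊆ Finset.univ :=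
        Finset.subset_univ _
      have hsum2 : mu ⟨0, hm⟩ + mu j ≤ n := by
        rw [← hmsum]
        calc mu ⟨0, hm⟩ + mu j = ∑ k ∈ ({⟨0, hm⟩, j} : Finset (Fin m)), mu k := by
              rw [Finset.sum_pair (Ne.symm hj)]
          _ ≤ ∑ k, mu k :=
              Finset.sum_le_sum_of_subset_of_nonneg hsub (fun _ _ _ => Nat.zero_le _)
      have := hmstab.1
      omega
    by_cases hi : i = ⟨0, hl⟩
    · subst hi
      have hj : j ≠ ⟨0, hm⟩ := fun h => hij ⟨rfl, h⟩
      calc (Finset.univ.filter fun a => s a = ⟨0, hl⟩ ∧ t a = j).card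
          ≤ (Finset.univ.filter fun a => t a = j).card :=
            by
              rw [Finset.filter_and]
              exact Finset.card_le_card Finset.inter_subset_right
        _ = mu j := ht j
        _ < p ^ r := keym j hj
    · calc (Finset.univ.filter fun a => s a = i ∧ t a = j).card
          ≤ (Finset.univ.filter fun a => s a = i).card := by
            rw [Finset.filter_and]
            exact Finset.card_le_card Finset.inter_subset_left
        _ = lam i := hs i
        _ < p ^ r := key i hi
end
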